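/- arXiv:1007.1391 — 6 statements merged into one kernel-verified Lean document; each statement's English description precedes it below -/
import Mathlib

section
/- For all configurations x, y ∈ ℤ^N_>, the determinant det[ F_{j−i}(x_i − y_j, 0) ]_{i,j=1,…,N} equals 1 if x = y and 0 otherwise. -/
/-- `F_n(x,t) = (1/2πi) ∮_{|w|=r} (q+p/w)^t (1-w)^{-n} w^{x-1} dw` for `t ≥ 0`, `0` for `t < 0`. -/
noncomputable def F (p r : ℝ) (n x t : ℤ) : ℂ :=
  if 0 ≤ t then
    (2 * Real.pi * Complex.I)⁻¹ *
      ∮ w in C(0, r), ((1 - p : ℂ) + (p : ℂ) / w) ^ t * (1 - w) ^ (-n) * w ^ (x - 1)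
  else 0

open Complex Metric Set

section Aux

variable {r : ℝ}

lemma ne_zero_of_sphere (hr0 : 0 < r) {z : ℂ} (hz : z ∈ sphere (0 : ℂ) r) : z ≠ 0 := by
  intro h
  rw [mem_sphere_iff_norm, h] at hz
  simp at hz
  linarith

lemma circle_zpow_zero (hr0 : 0 < r) {e : ℤ} (he : e ≠ -1) :
    (∮ z in C((0 : ℂ), r), z ^ e) = 0 := by
  have h := circleIntegral.integral_sub_zpow_of_ne he 0 0 r
  simpa using h

lemma circle_integrable_aux (hr0 : 0 < r) (m : ℕ) (e : ℤ) :
    CircleIntegrable (fun z : ℂ => (1 - z) ^ m * z ^ e) 0 r := by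
  apply ContinuousOn.circleIntegrable hr0.le
  intro z hz
  have hz0 : z ≠ 0 := ne_zero_of_sphere hr0 hz
  exact (((continuous_const.sub continuous_id).pow m).continuousAt.mul
    (continuousAt_zpow₀ z e (Or.inl hz0))).continuousWithinAt

/-- `∮ (1-z)^m z^e = 0` when `e + m ≤ -2`. -/
lemma circle_poly_zpow_zero (hr0 : 0 < r) :
    ∀ (m : ℕ) (e : ℤ), e + m ≤ -2 → (∮ z in C((0 : ℂ), r), (1 - z) ^ m * z ^ e) = 0 := by
  intro m
  induction m with
  | zero =>
    intro e he
    simp only [pow_zero, one_mul]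
    exact circle_zpow_zero hr0 (by omega)
  | succ m ih =>
    intro e he
    have key : (∮ z in C((0 : ℂ), r), (1 - z) ^ (m + 1) * z ^ e) =
        ∮ z in C((0 : ℂ), r), ((1 - z) ^ m * z ^ e - (1 - z) ^ m * z ^ (e + 1)) := by
      apply circleIntegral.integral_congr hr0.le
      intro z hz
      have hz0 : z ≠ 0 := ne_zero_of_sphere hr0 hz
      have h1 : z ^ (e + 1) = z ^ e * z := zpow_add_one₀ hz0 e
      show (1 - z) ^ (m + 1) * z ^ e = (1 - z) ^ m * z ^ e - (1 - z) ^ m * z ^ (e + 1)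
      rw [h1, pow_succ]
      ring
    rw [key, circleIntegral.integral_sub (circle_integrable_aux hr0 m e)
      (circle_integrable_aux hr0 m (e + 1)), ih e (by push_cast; push_cast at he; omega),
      ih (e + 1) (by push_cast; push_cast at he; omega), sub_zero]

/-- `∮ (1-z)^(-n) z^(a-1) = 0` when `a ≥ 1` (integrand is holomorphic in the disk). -/
lemma circle_hol_zero (hr0 : 0 < r) (hr1 : r < 1) (n a : ℤ) (ha : 1 ≤ a) :
    (∮ z in C((0 : ℂ), r), (1 - z) ^ (-n) * z ^ (a - 1)) = 0 := by
  have hdiff : ∀ z : ℂ, ‖z‖ ≤ r →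
      DifferentiableAt ℂ (fun z : ℂ => (1 - z) ^ (-n) * z ^ (a - 1)) z := by
    intro z hz
    have h1 : (1 : ℂ) - z ≠ 0 := by
      intro h
      have : z = 1 := by linear_combination -h
      rw [this] at hz
      simp at hz
      linarith
    have hd1 : DifferentiableAt ℂ (fun z : ℂ => (1 - z) ^ (-n)) z :=
      (differentiableAt_const (1 : ℂ)).sub differentiableAt_id |>.zpow (Or.inl h1)
    have hd2 : DifferentiableAt ℂ (fun z : ℂ => z ^ (a - 1)) z :=
      differentiableAt_zpow.mpr (Or.inr (by omega))
    exact hd1.mul hd2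
  apply circleIntegral_eq_zero_of_differentiable_on_off_countable hr0.le countable_empty
  · intro z hz
    rw [mem_closedBall_iff_norm, sub_zero] at hz
    exact (hdiff z hz).continuousAt.continuousWithinAt
  · rintro z ⟨hz, -⟩
    rw [mem_ball_iff_norm, sub_zero] at hz
    exact hdiff z hz.le

lemma circle_inv_eq (hr0 : 0 < r) :
    (∮ z in C((0 : ℂ), r), z ^ (-1 : ℤ)) = 2 * Real.pi * Complex.I := by
  have h := circleIntegral.integral_sub_inv_of_mem_ball
    (show (0 : ℂ) ∈ ball (0 : ℂ) r by simpa using hr0)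
  rw [← h]
  apply circleIntegral.integral_congr hr0.le
  intro z _
  simp [zpow_neg_one]

variable {p : ℝ}

lemma F_eq (hr0 : 0 < r) (n x : ℤ) :
    F p r n x 0 = (2 * Real.pi * Complex.I)⁻¹ *
      ∮ w in C((0 : ℂ), r), (1 - w) ^ (-n) * w ^ (x - 1) := by
  rw [F, if_pos le_rfl]
  congr 1
  apply circleIntegral.integral_congr hr0.le
  intro z _
  simp only [zpow_zero, one_mul]

lemma F_pos_zero (hr0 : 0 < r) (hr1 : r < 1) (n x : ℤ) (hx : 1 ≤ x) :
    F p r n x 0 = 0 := by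
  rw [F_eq hr0, circle_hol_zero hr0 hr1 n x hx, mul_zero]

lemma F_neg_zero (hr0 : 0 < r) (n x : ℤ) (hn : n ≤ 0) (hx : x ≤ n - 1) :
    F p r n x 0 = 0 := by
  rw [F_eq hr0]
  have hm : ((-n).toNat : ℤ) = -n := Int.toNat_of_nonneg (by omega)
  have key : (∮ w in C((0 : ℂ), r), (1 - w) ^ (-n) * w ^ (x - 1)) =
      ∮ w in C((0 : ℂ), r), (1 - w) ^ ((-n).toNat) * w ^ (x - 1) := by
    apply circleIntegral.integral_congr hr0.le
    intro z _
    show (1 - z) ^ (-n) * z ^ (x - 1) = (1 - z) ^ ((-n).toNat) * z ^ (x - 1)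
    rw [← zpow_natCast (1 - z) (-n).toNat, hm]
  rw [key, circle_poly_zpow_zero hr0 (-n).toNat (x - 1) (by omega), mul_zero]

lemma F_zero_zero (hr0 : 0 < r) : F p r 0 0 0 = 1 := by
  rw [F_eq hr0]
  have key : (∮ w in C((0 : ℂ), r), (1 - w) ^ (-(0 : ℤ)) * w ^ ((0 : ℤ) - 1)) =
      ∮ w in C((0 : ℂ), r), w ^ (-1 : ℤ) := by
    apply circleIntegral.integral_congr hr0.le
    intro z _
    norm_num
  rw [key, circle_inv_eq hr0]
  have h2 : (2 * Real.pi * Complex.I : ℂ) ≠ 0 := by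
    simp [Real.pi_ne_zero, Complex.I_ne_zero]
  exact inv_mul_cancel₀ h2

/-- Quantitative bound from strict antitonicity: `x i + i ≤ x 0`. -/
lemma strictAnti_bound {N : ℕ} (x : Fin (N + 1) → ℤ) (hx : StrictAnti x) (i : Fin (N + 1)) :
    x i + (i : ℤ) ≤ x 0 := by
  induction i using Fin.induction with
  | zero => simp
  | succ i ih =>
    have h1 : x i.succ < x i.castSucc := hx Fin.castSucc_lt_succ
    have h2 : x i.castSucc + (i.castSucc : ℤ) ≤ x 0 := ih
    have h3 : ((i.succ : Fin (N + 1)) : ℤ) = ((i.castSucc : Fin (N + 1)) : ℤ) + 1 := by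
      simp [Fin.val_succ, Fin.coe_castSucc]
    omega

lemma aux_det (hr0 : 0 < r) (hr1 : r < 1) :
    ∀ (N : ℕ) (x y : Fin N → ℤ), StrictAnti x → StrictAnti y →
      Matrix.det (Matrix.of fun i j : Fin N =>
          F p r (((j : ℕ) : ℤ) - ((i : ℕ) : ℤ)) (x i - y j) 0) =
        if x = y then 1 else 0 := by
  intro N
  induction N with
  | zero =>
    intro x y _ _
    rw [if_pos (Subsingleton.elim x y), Matrix.det_isEmpty]
  | succ N ih =>
    intro x y hx hy
    rcases lt_trichotomy (x 0) (y 0) with h | h | h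
    · -- x 0 < y 0 : column 0 vanishes
      rw [if_neg (by rintro rfl; exact absurd h (lt_irrefl _))]
      apply Matrix.det_eq_zero_of_column_eq_zero 0
      intro i
      simp only [Matrix.of_apply]
      have hb : x i + (i : ℤ) ≤ x 0 := strictAnti_bound x hx i
      apply F_neg_zero hr0
      · simp only [Fin.val_zero, Nat.cast_zero]
        omega
      · simp only [Fin.val_zero, Nat.cast_zero]
        omega
    · -- x 0 = y 0 : expand along first row
      rw [Matrix.det_succ_row_zero, Finset.sum_eq_single 0]
      · -- main term
        have h00 : (Matrix.of fun i j : Fin (N + 1) =>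
            F p r (((j : ℕ) : ℤ) - ((i : ℕ) : ℤ)) (x i - y j) 0) 0 0 = 1 := by
          simp only [Matrix.of_apply, Fin.val_zero, Nat.cast_zero, sub_zero, h, sub_self]
          exact F_zero_zero hr0
        have hminor : ((Matrix.of fun i j : Fin (N + 1) =>
              F p r (((j : ℕ) : ℤ) - ((i : ℕ) : ℤ)) (x i - y j) 0).submatrix
              Fin.succ (Fin.succAbove 0)) =
            Matrix.of fun i j : Fin N =>
              F p r (((j : ℕ) : ℤ) - ((i : ℕ) : ℤ)) ((x ∘ Fin.succ) i - (y ∘ Fin.succ) j) 0 := by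
          ext i j
          simp only [Matrix.submatrix_apply, Matrix.of_apply, Fin.succAbove_zero,
            Function.comp_apply]
          exact congrArg (fun t : ℤ => F p r t (x i.succ - y j.succ) 0)
            (by push_cast [Fin.val_succ]; ring)
        rw [h00, hminor, ih (x ∘ Fin.succ) (y ∘ Fin.succ)
          (hx.comp_strictMono Fin.strictMono_succ) (hy.comp_strictMono Fin.strictMono_succ)]
        have hiff : (x ∘ Fin.succ = y ∘ Fin.succ) ↔ x = y := by
          constructor
          · intro he
            funext i
            induction i using Fin.cases with
            | zero => exact h
            | succ k => exact congrFun he k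
          · intro he
            rw [he]
        simp only [Fin.val_zero, pow_zero, one_mul]
        rw [if_congr hiff rfl rfl]
      · -- other terms vanish
        intro j _ hj
        have hj1 : 1 ≤ (j : ℕ) := by
          rcases Nat.eq_zero_or_pos (j : ℕ) with h0 | h0
          · exact absurd (Fin.ext h0) hj
          · exact h0
        have hyb : y j + (j : ℤ) ≤ y 0 := strictAnti_bound y hy j
        have hzero : (Matrix.of fun i j : Fin (N + 1) =>
            F p r (((j : ℕ) : ℤ) - ((i : ℕ) : ℤ)) (x i - y j) 0) 0 j = 0 := by
          simp only [Matrix.of_apply, Fin.val_zero, Nat.cast_zero, sub_zero]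
          apply F_pos_zero hr0 hr1
          omega
        rw [hzero, mul_zero, zero_mul]
      · intro h0
        exact absurd (Finset.mem_univ 0) h0
    · -- x 0 > y 0 : row 0 vanishes
      rw [if_neg (by rintro rfl; exact absurd h (lt_irrefl _))]
      apply Matrix.det_eq_zero_of_row_eq_zero 0
      intro j
      simp only [Matrix.of_apply]
      have hyb : y j + (j : ℤ) ≤ y 0 := strictAnti_bound y hy j
      apply F_pos_zero hr0 hr1
      omega

end Aux

/-- For configurations `x, y ∈ ℤ^N_>`, `det[F_{j-i}(x_i - y_j, 0)] = δ_{x,y}`. -/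
theorem det_F_zero_time (p r : ℝ) (hp : 0 < p) (hp1 : p < 1)
    (hr0 : 0 < r) (hr1 : r < 1) {N : ℕ} (x y : Fin N → ℤ)
    (hx : StrictAnti x) (hy : StrictAnti y) :
    Matrix.det (Matrix.of fun i j : Fin N =>
        F p r (((j : ℕ) : ℤ) - ((i : ℕ) : ℤ)) (x i - y j) 0) =
      if x = y then 1 else 0 := by
  exact aux_det hr0 hr1 N x y hx hy
end

section
/- Let x, y ∈ ℤ^N_> and let σ be a permutation of {1,…,N}. If the product ∏_{i=1}^N F_{σ(i)−i}(x_i − y_{σ(i)}, 0) is nonzero, then σ is the identity permutation and x = y. -/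
open Complex Metric Set

lemma circleInt_zpow_eq_zero {r : ℝ} {e : ℤ} (he : e ≠ -1) :
    (∮ w in C((0 : ℂ), r), w ^ e) = 0 := by
  simpa using circleIntegral.integral_sub_zpow_of_ne he (0 : ℂ) (0 : ℂ) r

lemma circleIntegral_finset_sum {ι : Type*} (s : Finset ι) (f : ι → ℂ → ℂ) {c : ℂ} {R : ℝ}
    (h : ∀ i ∈ s, CircleIntegrable (f i) c R) :
    (∮ z in C(c, R), ∑ i ∈ s, f i z) = ∑ i ∈ s, ∮ z in C(c, R), f i z := by
  simp only [circleIntegral, Finset.smul_sum]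
  exact intervalIntegral.integral_finset_sum fun i hi => (circleIntegrable_iff R).mp (h i hi)

lemma circleInt_main_zero {r : ℝ} (hr0 : 0 < r) {n m : ℤ} (hn : n ≤ 0) (hm : m < n) :
    (∮ w in C((0 : ℂ), r), (1 - w) ^ (-n) * w ^ (m - 1)) = 0 := by
  obtain ⟨d, rfl⟩ : ∃ d : ℕ, n = -(d : ℤ) := ⟨(-n).toNat, by omega⟩
  have hmd : m + d ≤ -1 := by omega
  have hcong : EqOn (fun w : ℂ => (1 - w) ^ (-(-(d : ℤ))) * w ^ (m - 1))
      (fun w : ℂ => ∑ k ∈ Finset.range (d + 1),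
        (fun w : ℂ => ((-1 : ℂ)) ^ (d - k) * (d.choose k : ℂ) * w ^ (((d - k : ℕ) : ℤ) + (m - 1))) w)
      (sphere (0 : ℂ) r) := by
    intro w hw
    have hw0 : w ≠ 0 := by
      intro h
      rw [mem_sphere_iff_norm, h] at hw
      simp at hw
      exact hr0.ne hw
    simp only [neg_neg, zpow_natCast]
    rw [sub_eq_add_neg, add_pow, Finset.sum_mul]
    refine Finset.sum_congr rfl fun k hk => ?_
    rw [neg_pow, one_pow, one_mul]
    rw [zpow_add₀ hw0, zpow_natCast]
    ring
  rw [circleIntegral.integral_congr hr0.le hcong]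
  rw [circleIntegral_finset_sum]
  · refine Finset.sum_eq_zero fun k hk => ?_
    rw [circleIntegral.integral_const_mul, circleInt_zpow_eq_zero, mul_zero]
    have : ((d - k : ℕ) : ℤ) ≤ d := by
      have := Nat.sub_le d k
      exact_mod_cast this
    omega
  · intro k hk
    refine ContinuousOn.circleIntegrable hr0.le ?_
    refine continuousOn_const.mul (continuousOn_id.zpow₀ _ fun z hz => Or.inl ?_)
    intro hzz
    simp only [id_eq] at hzz
    rw [mem_sphere_iff_norm, hzz] at hz
    simp at hz
    exact hr0.ne hz

lemma circleInt_hol_zero {r : ℝ} (hr0 : 0 ≤ r) (hr1 : r < 1) {n m : ℤ} (hm : 1 ≤ m) :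
    (∮ w in C((0 : ℂ), r), (1 - w) ^ (-n) * w ^ (m - 1)) = 0 := by
  have hdiff : ∀ z : ℂ, ‖z‖ ≤ r →
      DifferentiableAt ℂ (fun w : ℂ => (1 - w) ^ (-n) * w ^ (m - 1)) z := by
    intro z hz
    have h1 : (1 : ℂ) - z ≠ 0 := by
      intro h
      have : z = 1 := by linear_combination -h
      rw [this] at hz
      simp at hz
      linarith
    exact (((differentiableAt_const _).sub differentiableAt_id).zpow (Or.inl h1)).mul
      (differentiableAt_id.zpow (Or.inr (by omega)))
  refine circleIntegral_eq_zero_of_differentiable_on_off_countable hr0 Set.countable_empty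
    (fun z hz => ?_) (fun z hz => ?_)
  · exact (hdiff z (by simpa [mem_closedBall_iff_norm] using hz)).continuousAt.continuousWithinAt
  · exact hdiff z (le_of_lt (by simpa [mem_ball_iff_norm] using hz.1))

lemma F_constraints {p r : ℝ} (hr0 : 0 < r) (hr1 : r < 1) {n m : ℤ}
    (h : F p r n m 0 ≠ 0) : m ≤ 0 ∧ (n ≤ 0 → n ≤ m) := by
  rw [F, if_pos le_rfl] at h
  simp only [zpow_zero, one_mul] at h
  constructor
  · by_contra hm
    rw [circleInt_hol_zero hr0.le hr1 (by omega), mul_zero] at h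
    exact h rfl
  · intro hn
    by_contra hm
    rw [circleInt_main_zero hr0 hn (by omega), mul_zero] at h
    exact h rfl

lemma strictAnti_le_int {N : ℕ} {f : Fin N → ℤ} (hf : StrictAnti f) {a b : Fin N} (hab : a ≤ b) :
    f b + ((b : ℕ) : ℤ) ≤ f a + ((a : ℕ) : ℤ) := by
  obtain ⟨k, hk⟩ : ∃ k : ℕ, (b : ℕ) = (a : ℕ) + k := ⟨(b : ℕ) - (a : ℕ), by omega⟩
  induction k generalizing b with
  | zero =>
    have : a = b := Fin.ext (by omega)
    subst this; rfl
  | succ k ih =>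
    have hc : (a : ℕ) + k < N := by omega
    set c : Fin N := ⟨(a : ℕ) + k, hc⟩ with hcdef
    have h1 : c < b := by
      rw [Fin.lt_def]; simp [hcdef, hk]
    have h2 : f b < f c := hf h1
    have h3 : f c + ((c : ℕ) : ℤ) ≤ f a + ((a : ℕ) : ℤ) := ih (Fin.le_def.mpr (by simp [hcdef])) rfl
    have hcv : ((c : ℕ) : ℤ) = (a : ℕ) + k := by simp [hcdef]
    omega

/-- Lemma (cycles), part 1: for `x, y ∈ ℤ^N_>` and a permutation `σ`, if
`∏_i F_{σ(i)-i}(x_i - y_{σ(i)}, 0) ≠ 0` then `σ = id` and `x = y`. -/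
theorem F_product_zero_time (p r : ℝ) (hp : 0 < p) (hp1 : p < 1)
    (hr0 : 0 < r) (hr1 : r < 1) {N : ℕ} (x y : Fin N → ℤ)
    (hx : StrictAnti x) (hy : StrictAnti y) (σ : Equiv.Perm (Fin N))
    (h : ∏ i : Fin N,
        F p r (((σ i : ℕ) : ℤ) - ((i : ℕ) : ℤ)) (x i - y (σ i)) 0 ≠ 0) :
    σ = 1 ∧ x = y := by
  classical
  have hfac : ∀ i : Fin N, F p r (((σ i : ℕ) : ℤ) - ((i : ℕ) : ℤ)) (x i - y (σ i)) 0 ≠ 0 :=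
    fun i => Finset.prod_ne_zero_iff.mp h i (Finset.mem_univ i)
  have hA : ∀ i, x i - y (σ i) ≤ 0 := fun i => (F_constraints hr0 hr1 (hfac i)).1
  have hB : ∀ i, (((σ i : ℕ) : ℤ) - ((i : ℕ) : ℤ) ≤ 0) →
      ((σ i : ℕ) : ℤ) - ((i : ℕ) : ℤ) ≤ x i - y (σ i) :=
    fun i hi => (F_constraints hr0 hr1 (hfac i)).2 hi
  have hσ : σ = 1 := by
    by_contra hne
    have hs : ∃ i, σ i ≠ i := by
      by_contra hall
      push_neg at hall
      exact hne (Equiv.ext hall)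
    let s : Finset (Fin N) := Finset.univ.filter fun i => σ i ≠ i
    have hsne : s.Nonempty :=
      ⟨hs.choose, Finset.mem_filter.mpr ⟨Finset.mem_univ _, hs.choose_spec⟩⟩
    set i₀ := s.min' hsne with hi₀def
    have hi₀mem : σ i₀ ≠ i₀ := (Finset.mem_filter.mp (s.min'_mem hsne)).2
    have hmin : ∀ j, j < i₀ → σ j = j := by
      intro j hj
      by_contra hj'
      exact absurd (s.min'_le j (Finset.mem_filter.mpr ⟨Finset.mem_univ _, hj'⟩))
        (not_le.mpr hj)
    have h1 : i₀ < σ i₀ := by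
      rcases lt_or_gt_of_ne hi₀mem with hlt | hgt
      · exact absurd (σ.injective (hmin (σ i₀) hlt)) hi₀mem
      · exact hgt
    set j₀ := σ.symm i₀ with hj₀def
    have hj : σ j₀ = i₀ := σ.apply_symm_apply i₀
    have h2 : i₀ < j₀ := by
      rcases lt_trichotomy j₀ i₀ with hlt | heq | hgt
      · have := hmin j₀ hlt
        rw [hj] at this
        exact absurd this.symm (ne_of_lt hlt)
      · rw [heq] at hj
        exact absurd hj hi₀mem
      · exact hgt
    have e1 : x i₀ - y (σ i₀) ≤ 0 := hA i₀
    have e2 : y (σ i₀) < y i₀ := hy h1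
    have e3 : ((σ j₀ : ℕ) : ℤ) - ((j₀ : ℕ) : ℤ) ≤ x j₀ - y (σ j₀) := by
      refine hB j₀ ?_
      rw [hj]
      have : (i₀ : ℕ) < (j₀ : ℕ) := h2
      omega
    rw [hj] at e3
    have e4 : x j₀ + ((j₀ : ℕ) : ℤ) ≤ x i₀ + ((i₀ : ℕ) : ℤ) := strictAnti_le_int hx h2.le
    omega
  subst hσ
  simp only [Equiv.Perm.one_apply] at hA hB
  refine ⟨rfl, funext fun i => ?_⟩
  have := hB i (by omega)
  have := hA i
  omega
end

section
/- Let B = {(x_i,t_i)}_{i∈ℤ} be a boundary set, let L̃ be its associated lower set, and suppose (x⁰,t⁰) ∈ L̃ and (x,t) ∉ L̃. Then the single-particle Green function satisfies the convolution formula G((x,t)|(x⁰,t⁰)) = Σ_{i∈ℤ} Σ_{x''} G((x,t)|(x'',t_i+1))·W({(x_i,t_i),(x'',t_i+1)})·G((x_i,t_i)|(x⁰,t⁰)), where the inner sum runs over x'' ∈ {x_i, x_i+1} with (x'',t_i+1) ∉ L̃, W({(a,s),(a+1,s+1)}) = p and W({(a,s),(a,s+1)}) = q, and the outer sum has finitely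 many nonzero terms. -/
open scoped Classical

/-- Green function of the directed Bernoulli random walk:
`G((x,t)|(x⁰,t⁰)) = p^{x-x⁰} q^{(t-t⁰)-(x-x⁰)} binom(t-t⁰, x-x⁰)` if
`0 ≤ x-x⁰ ≤ t-t⁰`, and `0` otherwise. -/
noncomputable def Gs (p : ℝ) (x t x0 t0 : ℤ) : ℝ :=
  if 0 ≤ x - x0 ∧ x - x0 ≤ t - t0 then
    p ^ (x - x0).toNat * (1 - p) ^ ((t - t0) - (x - x0)).toNat *
      ((t - t0).toNat.choose ((x - x0).toNat))
  else 0

/-- A boundary set `B = {(x_i,t_i)}_{i∈ℤ}`: at each step either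
`(x_{i+1},t_{i+1}) = (x_i+1,t_i)` or `(x_{i+1},t_{i+1}) = (x_i,t_i-1)`. -/
def IsBoundary (B : ℤ → ℤ × ℤ) : Prop :=
  ∀ i : ℤ, B (i + 1) = ((B i).1 + 1, (B i).2) ∨ B (i + 1) = ((B i).1, (B i).2 - 1)

/-- The lower set `L̃` associated with a boundary `B`. -/
def lowerSet (B : ℤ → ℤ × ℤ) : Set (ℤ × ℤ) :=
  {z | ∃ i : ℤ, z.1 ≤ (B i).1 ∧ z.2 ≤ (B i).2}

/- ## Auxiliary lemmas -/

lemma Gs_self (p : ℝ) (a b : ℤ) : Gs p a b a b = 1 := by simp [Gs]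

lemma Gs_eq_zero (p : ℝ) {x t x0 t0 : ℤ} (h : ¬(0 ≤ x - x0 ∧ x - x0 ≤ t - t0)) :
    Gs p x t x0 t0 = 0 := if_neg h

lemma Gs_ne (p : ℝ) {x t x0 t0 : ℤ} (h : Gs p x t x0 t0 ≠ 0) :
    0 ≤ x - x0 ∧ x - x0 ≤ t - t0 := by
  by_contra hc; exact h (Gs_eq_zero p hc)

lemma key (p q : ℝ) (M E : ℕ) (hE : E < M) :
    p^(E+1) * q^(M-E) * (((M+1).choose (E+1) : ℕ) : ℝ) =
      p * (p^E * q^(M-E) * ((M.choose E : ℕ) : ℝ)) +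
        q * (p^(E+1) * q^(M-1-E) * ((M.choose (E+1) : ℕ) : ℝ)) := by
  rw [Nat.choose_succ_succ]
  have h1 : M - E = (M - 1 - E) + 1 := by omega
  rw [h1, pow_succ]
  push_cast
  ring

lemma Gs_rec (p : ℝ) (a b x0 t0 : ℤ) (h : ¬(a = x0 ∧ b = t0)) :
    Gs p a b x0 t0 = p * Gs p a b (x0+1) (t0+1) + (1-p) * Gs p a b x0 (t0+1) := by
  by_cases hd : 0 ≤ a - x0
  · by_cases hn : a - x0 ≤ b - t0
    · by_cases hd0 : a - x0 = 0
      · have hn1 : 1 ≤ b - t0 := by omega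
        rw [Gs, Gs, Gs, if_pos ⟨hd, hn⟩, if_neg (by omega), if_pos (by omega)]
        have e1 : (a - x0).toNat = 0 := by omega
        have e3 : (b - t0 - (a - x0)).toNat = (b - (t0+1) - (a - x0)).toNat + 1 := by omega
        rw [e1, e3, pow_succ]
        simp
        ring
      · by_cases hdn : a - x0 = b - t0
        · rw [Gs, Gs, Gs, if_pos ⟨hd, hn⟩, if_pos (by omega), if_neg (by omega)]
          have e3 : (a - x0).toNat = (a - (x0+1)).toNat + 1 := by omega
          have e4 : (b - t0 - (a - x0)).toNat = 0 := by omega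
          have e5 : (b - (t0+1) - (a - (x0+1))).toNat = 0 := by omega
          have e6 : (b - t0).toNat = (a - x0).toNat := by omega
          have e7 : (b - (t0+1)).toNat = (a - (x0+1)).toNat := by omega
          rw [e4, e5, e6, e7, e3, pow_succ]
          simp
          ring
        · have hd1 : 1 ≤ a - x0 ∨ a - x0 = 0 := by omega
          rw [Gs, Gs, Gs, if_pos ⟨hd, hn⟩, if_pos (by omega), if_pos (by omega)]
          set M := (b - (t0+1)).toNat with hM
          set E := (a - (x0+1)).toNat with hE
          rcases hd1 with hd1 | hd1
          · have e1 : (a - x0).toNat = E + 1 := by omega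
            have e2 : (b - t0).toNat = M + 1 := by omega
            have e3 : (b - t0 - (a - x0)).toNat = M - E := by omega
            have e4 : (b - (t0+1) - (a - (x0+1))).toNat = M - E := by omega
            have e5 : (b - (t0+1) - (a - x0)).toNat = M - 1 - E := by omega
            rw [e1, e2, e3, e4, e5]
            exact key p (1-p) M E (by omega)
          · exact absurd hd1 hd0
    · rw [Gs_eq_zero p (by omega), Gs_eq_zero p (by omega), Gs_eq_zero p (by omega)]
      ring
  · rw [Gs_eq_zero p (by omega), Gs_eq_zero p (by omega), Gs_eq_zero p (by omega)]
    ring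

lemma bd_diff {B : ℤ → ℤ × ℤ} (hB : IsBoundary B) (i : ℤ) :
    (B i).1 - (B i).2 = (B 0).1 - (B 0).2 + i := by
  induction i using Int.induction_on with
  | zero => simp
  | succ k ih =>
    rcases hB k with h | h <;> rw [h] <;> push_cast <;> omega
  | pred k ih =>
    have := hB (-(k:ℤ) - 1)
    rw [show (-(k:ℤ) - 1 + 1) = -(k:ℤ) by ring] at this
    rcases this with h | h <;> rw [h] at ih <;> simp at ih ⊢ <;> omega

lemma bd_inj {B : ℤ → ℤ × ℤ} (hB : IsBoundary B) {i j : ℤ} (h : B i = B j) : i = j := by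
  have hi := bd_diff hB i
  have hj := bd_diff hB j
  rw [h] at hi
  omega

lemma bd_mono {B : ℤ → ℤ × ℤ} (hB : IsBoundary B) {i j : ℤ} (hij : i ≤ j) :
    (B i).1 ≤ (B j).1 ∧ (B j).2 ≤ (B i).2 := by
  obtain ⟨k, rfl⟩ : ∃ k : ℕ, j = i + k := ⟨(j - i).toNat, by omega⟩
  clear hij
  induction k with
  | zero => simp
  | succ m ih =>
    have : (i + (m+1 : ℕ) : ℤ) = (i + m) + 1 := by push_cast; ring
    rw [this]
    rcases hB (i + m) with h | h <;> rw [h] <;> constructor <;> simp <;> omega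

lemma mem_lowerSet_mono {B : ℤ → ℤ × ℤ} {a s : ℤ} {z : ℤ × ℤ} (h : z ∈ lowerSet B)
    (ha : a ≤ z.1) (hs : s ≤ z.2) : (a, s) ∈ lowerSet B := by
  obtain ⟨i, h1, h2⟩ := h
  exact ⟨i, by omega, by omega⟩

lemma bd_mem_lowerSet {B : ℤ → ℤ × ℤ} (i : ℤ) : B i ∈ lowerSet B := ⟨i, le_refl _, le_refl _⟩

lemma corner {B : ℤ → ℤ × ℤ} (hB : IsBoundary B) {a s : ℤ} (h1 : (a, s) ∈ lowerSet B)
    (h2 : ((a+1), (s+1)) ∉ lowerSet B) : B (a - s - ((B 0).1 - (B 0).2)) = (a, s) := by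
  set c := (B 0).1 - (B 0).2 with hc
  set i := a - s - c with hi
  have hdi : (B i).1 - (B i).2 = a - s := by rw [bd_diff hB]; omega
  have hxa : (B i).1 ≤ a := by
    by_contra hgt
    push_neg at hgt
    exact h2 ⟨i, by omega, by omega⟩
  obtain ⟨j, hj1, hj2⟩ := h1
  rcases le_or_gt j i with hle | hlt
  · have := bd_mono hB hle
    have hx : (B i).1 = a := by omega
    have ht : (B i).2 = s := by omega
    exact Prod.ext hx ht
  · have := bd_mono hB hlt.le
    have ht : (B i).2 = s := by omega
    have hx : (B i).1 = a := by omega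
    exact Prod.ext hx ht

noncomputable def Cf (p : ℝ) (B : ℤ → ℤ × ℤ) (x t i : ℤ) : ℝ :=
  (if ((B i).1, (B i).2 + 1) ∉ lowerSet B then
      Gs p x t (B i).1 ((B i).2 + 1) * (1 - p) else 0) +
    (if ((B i).1 + 1, (B i).2 + 1) ∉ lowerSet B then
      Gs p x t ((B i).1 + 1) ((B i).2 + 1) * p else 0)

noncomputable def Ff (p : ℝ) (B : ℤ → ℤ × ℤ) (x t x0 t0 i : ℤ) : ℝ :=
  Cf p B x t i * Gs p (B i).1 (B i).2 x0 t0

lemma Cf_ne (p : ℝ) (B : ℤ → ℤ × ℤ) {x t i : ℤ} (h : Cf p B x t i ≠ 0) :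
    (B i).1 ≤ x ∧ (B i).2 ≤ t - 1 := by
  unfold Cf at h
  have h' : (if ((B i).1, (B i).2 + 1) ∉ lowerSet B then
      Gs p x t (B i).1 ((B i).2 + 1) * (1 - p) else 0) ≠ 0 ∨
      (if ((B i).1 + 1, (B i).2 + 1) ∉ lowerSet B then
      Gs p x t ((B i).1 + 1) ((B i).2 + 1) * p else 0) ≠ 0 := by
    by_contra hc
    push_neg at hc
    exact h (by rw [hc.1, hc.2, add_zero])
  rcases h' with h' | h'
  · by_cases hc1 : ((B i).1, (B i).2 + 1) ∉ lowerSet B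
    · rw [if_pos hc1] at h'
      have := Gs_ne p (left_ne_zero_of_mul h')
      omega
    · rw [if_neg hc1] at h'
      exact absurd rfl h'
  · by_cases hc1 : ((B i).1 + 1, (B i).2 + 1) ∉ lowerSet B
    · rw [if_pos hc1] at h'
      have := Gs_ne p (left_ne_zero_of_mul h')
      omega
    · rw [if_neg hc1] at h'
      exact absurd rfl h'

lemma Ff_zero_outside (p : ℝ) (B : ℤ → ℤ × ℤ) {x t x0 t0 : ℤ}
    (h : (x0, t0) ∉ lowerSet B) (i : ℤ) : Ff p B x t x0 t0 i = 0 := by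
  unfold Ff
  rcases eq_or_ne (Gs p (B i).1 (B i).2 x0 t0) 0 with hg | hg
  · rw [hg, mul_zero]
  · obtain ⟨h1, h2⟩ := Gs_ne p hg
    exact absurd (mem_lowerSet_mono (bd_mem_lowerSet i) (by omega) (by omega)) h
lemma Ff_support (p : ℝ) (B : ℤ → ℤ × ℤ) (hB : IsBoundary B) (x t x0 t0 x0' t0' : ℤ)
    (hx : x0 ≤ x0') (ht : t0 ≤ t0') :
    Function.support (Ff p B x t x0' t0') ⊆
      ↑(Finset.Icc (x0 - t + 1 - ((B 0).1 - (B 0).2)) (x - t0 - ((B 0).1 - (B 0).2))) := by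
  intro i hi
  have hC : Cf p B x t i ≠ 0 := left_ne_zero_of_mul hi
  have hG : Gs p (B i).1 (B i).2 x0' t0' ≠ 0 := right_ne_zero_of_mul hi
  have h1 := Cf_ne p B hC
  have h2 := Gs_ne p hG
  have h3 := bd_diff hB i
  simp only [Finset.coe_Icc, Set.mem_Icc]
  omega

lemma main_lemma (p : ℝ) (B : ℤ → ℤ × ℤ) (hB : IsBoundary B) (x t : ℤ)
    (h1 : (x, t) ∉ lowerSet B) (n : ℕ) :
    ∀ x0 t0 : ℤ, (x0, t0) ∈ lowerSet B → (t - t0).toNat ≤ n →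
      Gs p x t x0 t0 = ∑ᶠ i, Ff p B x t x0 t0 i := by
  induction n with
  | zero =>
    intro x0 t0 h0 hn
    have ht : t ≤ t0 := by omega
    have hzero : ∀ i, Ff p B x t x0 t0 i = 0 := by
      intro i
      unfold Ff
      rcases eq_or_ne (Cf p B x t i) 0 with hc | hc
      · rw [hc, zero_mul]
      · have hb := Cf_ne p B hc
        rw [Gs_eq_zero p (by omega), mul_zero]
    rw [finsum_eq_zero_of_forall_eq_zero hzero]
    have hne : ¬(x = x0 ∧ t = t0) := by
      rintro ⟨rfl, rfl⟩; exact h1 h0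
    apply Gs_eq_zero
    rcases eq_or_ne x x0 with rfl | hx
    · have : t ≠ t0 := fun h => hne ⟨rfl, h⟩
      omega
    · omega
  | succ n IH =>
    intro x0 t0 h0 hn
    by_cases ht : t ≤ t0
    · -- same base argument
      have hzero : ∀ i, Ff p B x t x0 t0 i = 0 := by
        intro i
        unfold Ff
        rcases eq_or_ne (Cf p B x t i) 0 with hc | hc
        · rw [hc, zero_mul]
        · have hb := Cf_ne p B hc
          rw [Gs_eq_zero p (by omega), mul_zero]
      rw [finsum_eq_zero_of_forall_eq_zero hzero]
      have hne : ¬(x = x0 ∧ t = t0) := by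
        rintro ⟨rfl, rfl⟩; exact h1 h0
      apply Gs_eq_zero
      rcases eq_or_ne x x0 with rfl | hx
      · have : t ≠ t0 := fun h => hne ⟨rfl, h⟩
        omega
      · omega
    · push_neg at ht
      have hn' : (t - (t0+1)).toNat ≤ n := by omega
      have hne : ¬(x = x0 ∧ t = t0) := by
        rintro ⟨rfl, rfl⟩; exact h1 h0
      set c := (B 0).1 - (B 0).2 with hc
      set S : Finset ℤ := Finset.Icc (x0 - t + 1 - c) (x - t0 - c) with hS
      by_cases hb : ((x0+1), (t0+1)) ∈ lowerSet B
      · -- interior case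
        have hv : (x0, t0+1) ∈ lowerSet B :=
          mem_lowerSet_mono hb (by simp) (by simp)
        have e1 : ∑ᶠ i, Ff p B x t x0 t0 i = ∑ i ∈ S, Ff p B x t x0 t0 i :=
          finsum_eq_finset_sum_of_support_subset _
            (Ff_support p B hB x t x0 t0 x0 t0 le_rfl le_rfl)
        have e2 : ∑ᶠ i, Ff p B x t (x0+1) (t0+1) i = ∑ i ∈ S, Ff p B x t (x0+1) (t0+1) i :=
          finsum_eq_finset_sum_of_support_subset _
            (Ff_support p B hB x t x0 t0 (x0+1) (t0+1) (by omega) (by omega))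
        have e3 : ∑ᶠ i, Ff p B x t x0 (t0+1) i = ∑ i ∈ S, Ff p B x t x0 (t0+1) i :=
          finsum_eq_finset_sum_of_support_subset _
            (Ff_support p B hB x t x0 t0 x0 (t0+1) le_rfl (by omega))
        have hterm : ∀ i ∈ S, Ff p B x t x0 t0 i =
            p * Ff p B x t (x0+1) (t0+1) i + (1-p) * Ff p B x t x0 (t0+1) i := by
          intro i _
          by_cases hBi : B i = (x0, t0)
          · have c1 : ((B i).1, (B i).2 + 1) ∈ lowerSet B := by rw [hBi]; exact hv
            have c2 : ((B i).1 + 1, (B i).2 + 1) ∈ lowerSet B := by rw [hBi]; exact hb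
            have hC : Cf p B x t i = 0 := by
              unfold Cf
              rw [if_neg (not_not_intro c1), if_neg (not_not_intro c2), add_zero]
            unfold Ff
            rw [hC]
            ring
          · have hne' : ¬((B i).1 = x0 ∧ (B i).2 = t0) := by
              rintro ⟨hx, hy⟩
              exact hBi (Prod.ext hx hy)
            unfold Ff
            rw [Gs_rec p (B i).1 (B i).2 x0 t0 hne']
            ring
        rw [Gs_rec p x t x0 t0 hne, IH (x0+1) (t0+1) hb (by omega), IH x0 (t0+1) hv hn',
          e1, e2, e3, Finset.mul_sum, Finset.mul_sum, ← Finset.sum_add_distrib]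
        exact (Finset.sum_congr rfl hterm).symm
      · -- boundary case
        have hcor : B (x0 - t0 - c) = (x0, t0) := corner hB h0 hb
        set j : ℤ := x0 - t0 - c with hj
        set S' : Finset ℤ := insert j S with hS'
        have hjS' : j ∈ S' := Finset.mem_insert_self _ _
        have hsub : (S : Set ℤ) ⊆ (S' : Set ℤ) := by
          intro i hi
          simp only [hS', Finset.coe_insert, Set.mem_insert_iff]
          exact Or.inr hi
        have e1 : ∑ᶠ i, Ff p B x t x0 t0 i = ∑ i ∈ S', Ff p B x t x0 t0 i :=
          finsum_eq_finset_sum_of_support_subset _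
            ((Ff_support p B hB x t x0 t0 x0 t0 le_rfl le_rfl).trans hsub)
        have e3 : ∑ᶠ i, Ff p B x t x0 (t0+1) i = ∑ i ∈ S', Ff p B x t x0 (t0+1) i :=
          finsum_eq_finset_sum_of_support_subset _
            ((Ff_support p B hB x t x0 t0 x0 (t0+1) le_rfl (by omega)).trans hsub)
        have hsplit : ∑ i ∈ S', Ff p B x t x0 t0 i =
            Ff p B x t x0 t0 j + ∑ i ∈ S'.erase j, Ff p B x t x0 t0 i :=
          (Finset.add_sum_erase _ _ hjS').symm
        have hFj : Ff p B x t x0 t0 j = Cf p B x t j := by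
          unfold Ff
          rw [hcor]
          simp [Gs_self]
        have hterm : ∀ i ∈ S'.erase j, Ff p B x t x0 t0 i =
            (1-p) * Ff p B x t x0 (t0+1) i := by
          intro i hi
          have hij : i ≠ j := Finset.ne_of_mem_erase hi
          have hBi : B i ≠ (x0, t0) := by
            intro hEq
            exact hij (bd_inj hB (hEq.trans hcor.symm))
          have hne' : ¬((B i).1 = x0 ∧ (B i).2 = t0) := by
            rintro ⟨hx, hy⟩
            exact hBi (Prod.ext hx hy)
          have hout : Ff p B x t (x0+1) (t0+1) i = 0 := Ff_zero_outside p B hb i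
          unfold Ff at hout ⊢
          rw [Gs_rec p (B i).1 (B i).2 x0 t0 hne']
          have : Cf p B x t i * Gs p (B i).1 (B i).2 (x0+1) (t0+1) = 0 := hout
          linear_combination p * this
        have hFj3 : Ff p B x t x0 (t0+1) j = 0 := by
          unfold Ff
          rw [hcor]
          rw [Gs_eq_zero p (by omega), mul_zero]
        have hback : ∑ i ∈ S'.erase j, Ff p B x t x0 (t0+1) i =
            ∑ i ∈ S', Ff p B x t x0 (t0+1) i := by
          rw [← Finset.add_sum_erase _ _ hjS', hFj3, zero_add]
        have hCj : Cf p B x t j =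
            (if (x0, t0 + 1) ∉ lowerSet B then Gs p x t x0 (t0 + 1) * (1 - p) else 0) +
              (if ((x0 + 1), (t0 + 1)) ∉ lowerSet B then Gs p x t (x0+1) (t0+1) * p else 0) := by
          unfold Cf
          rw [hcor]
        rw [e1, hsplit, hFj, Finset.sum_congr rfl hterm, ← Finset.mul_sum, hback, ← e3]
        by_cases hv : (x0, t0+1) ∈ lowerSet B
        · rw [← IH x0 (t0+1) hv hn', hCj, if_neg (not_not_intro hv), if_pos hb, zero_add,
            Gs_rec p x t x0 t0 hne]
          ring
        · have hzero : ∀ i, Ff p B x t x0 (t0+1) i = 0 := Ff_zero_outside p B hv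
          rw [finsum_eq_zero_of_forall_eq_zero hzero, hCj, if_pos hv, if_pos hb,
            Gs_rec p x t x0 t0 hne]
          ring

/-- Convolution of the single-particle Green function over a boundary: for
`(x⁰,t⁰) ∈ L̃` and `(x,t) ∉ L̃`,
`G((x,t)|(x⁰,t⁰)) = Σ_i Σ_{x'' ∈ {x_i, x_i+1}, (x'',t_i+1) ∉ L̃}
  G((x,t)|(x'',t_i+1)) W({(x_i,t_i),(x'',t_i+1)}) G((x_i,t_i)|(x⁰,t⁰))`,
with `W` equal to `p` for the diagonal step and `q` for the vertical step;
the outer sum has finitely many nonzero terms. -/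
theorem single_particle_boundary_convolution (p : ℝ) (hp : 0 < p) (hp1 : p < 1)
    (B : ℤ → ℤ × ℤ) (hB : IsBoundary B) (x0 t0 x t : ℤ)
    (h0 : (x0, t0) ∈ lowerSet B) (h1 : (x, t) ∉ lowerSet B) :
    (Function.support (fun i : ℤ =>
        ((if ((B i).1, (B i).2 + 1) ∉ lowerSet B then
            Gs p x t (B i).1 ((B i).2 + 1) * (1 - p) else 0) +
          (if ((B i).1 + 1, (B i).2 + 1) ∉ lowerSet B then
            Gs p x t ((B i).1 + 1) ((B i).2 + 1) * p else 0)) *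
          Gs p (B i).1 (B i).2 x0 t0)).Finite ∧
    Gs p x t x0 t0 =
      ∑ᶠ i : ℤ,
        ((if ((B i).1, (B i).2 + 1) ∉ lowerSet B then
            Gs p x t (B i).1 ((B i).2 + 1) * (1 - p) else 0) +
          (if ((B i).1 + 1, (B i).2 + 1) ∉ lowerSet B then
            Gs p x t ((B i).1 + 1) ((B i).2 + 1) * p else 0)) *
          Gs p (B i).1 (B i).2 x0 t0 := by
  have hfun : (fun i : ℤ =>
      ((if ((B i).1, (B i).2 + 1) ∉ lowerSet B then
          Gs p x t (B i).1 ((B i).2 + 1) * (1 - p) else 0) +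
        (if ((B i).1 + 1, (B i).2 + 1) ∉ lowerSet B then
          Gs p x t ((B i).1 + 1) ((B i).2 + 1) * p else 0)) *
        Gs p (B i).1 (B i).2 x0 t0) = Ff p B x t x0 t0 := rfl
  constructor
  · rw [hfun]
    exact Set.Finite.subset (Finset.finite_toSet _)
      (Ff_support p B hB x t x0 t0 x0 t0 le_rfl le_rfl)
  · have := main_lemma p B hB x t h1 (t - t0).toNat x0 t0 h0 le_rfl
    rw [this]
    exact finsum_congr (fun i => rfl)
end

section
/- Let B = {(x_i,t_i)}_{i∈ℤ} be a boundary set with associated lower set L̃, and let (x⁰,t⁰) ∈ L̃. Define the exit probability P_e((x_i,t_i)) := p + q·[ (x_i, t_i+1) ∉ L̃ ]. Then the series Σ_{i∈ℤ} P_e((x_i,t_i)) · G((x_i,t_i)|(x⁰,t⁰)) converges and its sum equals 1; that is, (x',t') ↦ P_e((x',t'))·G((x',t')|(x⁰,t⁰)) defines a probability measure on B. -/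
open scoped Classical

namespace BPM


noncomputable def g (p : ℝ) (n k : ℕ) : ℝ := p ^ k * (1 - p) ^ (n - k) * (n.choose k)

lemma g_nonneg {p : ℝ} (h0 : 0 ≤ p) (h1 : p ≤ 1) (n k : ℕ) : 0 ≤ g p n k := by
  have h : (0:ℝ) ≤ 1 - p := by linarith
  unfold g; positivity

lemma g_zero {p : ℝ} {n k : ℕ} (h : n < k) : g p n k = 0 := by
  simp [g, Nat.choose_eq_zero_of_lt h]

lemma g_rec0 (p : ℝ) (n : ℕ) : g p (n+1) 0 = (1-p) * g p n 0 := by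
  simp [g, pow_succ]; ring

lemma g_rec (p : ℝ) (n k : ℕ) : g p (n+1) (k+1) = p * g p n k + (1-p) * g p n (k+1) := by
  rcases le_or_gt (k+1) n with h | h
  · have h1 : n + 1 - (k+1) = n - k := by omega
    have h2 : n - k = (n - (k+1)) + 1 := by omega
    simp only [g, Nat.choose_succ_succ, Nat.cast_add]
    rw [h1, h2, pow_succ]
    ring
  · have hc : n.choose (k+1) = 0 := Nat.choose_eq_zero_of_lt h
    rcases eq_or_lt_of_le (Nat.lt_succ_iff.mp h) with he | hlt
    · subst he
      simp [g, hc, Nat.choose_self, Nat.sub_self, pow_succ]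
      ring
    · have hc2 : (n+1).choose (k+1) = 0 := Nat.choose_eq_zero_of_lt (by omega)
      simp [g, hc, hc2, Nat.choose_eq_zero_of_lt hlt]

lemma Gs_zero_left {p : ℝ} {x t x0 t0 : ℤ} (h : x < x0) : Gs p x t x0 t0 = 0 :=
  if_neg (by omega)

lemma Gs_zero_right {p : ℝ} {x t x0 t0 : ℤ} (h : t - t0 < x - x0) : Gs p x t x0 t0 = 0 :=
  if_neg (by omega)

lemma Gs_eq_g {p : ℝ} {x t x0 t0 : ℤ} (hx : x0 ≤ x) (ht : t0 ≤ t) :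
    Gs p x t x0 t0 = g p (t - t0).toNat (x - x0).toNat := by
  by_cases h : x - x0 ≤ t - t0
  · rw [Gs, if_pos ⟨by omega, h⟩, g]
    rw [show ((t - t0) - (x - x0)).toNat = (t - t0).toNat - (x - x0).toNat by omega]
  · rw [Gs, if_neg (fun hh => h hh.2), g_zero (by omega)]

lemma Gs_self {p : ℝ} (x0 t0 : ℤ) : Gs p x0 t0 x0 t0 = 1 := by
  rw [Gs, if_pos ⟨by omega, by omega⟩]
  simp

lemma Gs_nonneg {p : ℝ} (h0 : 0 ≤ p) (h1 : p ≤ 1) (x t x0 t0 : ℤ) :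
    0 ≤ Gs p x t x0 t0 := by
  rcases le_or_gt x0 x with hx | hx
  · rcases le_or_gt t0 t with ht | ht
    · rw [Gs_eq_g hx ht]; exact g_nonneg h0 h1 _ _
    · rw [Gs, if_neg (by omega)]
  · rw [Gs_zero_left hx]

lemma Gs_rec {p : ℝ} {x t x0 t0 : ℤ} (ht : t0 ≤ t) :
    Gs p x (t+1) x0 t0 = p * Gs p (x-1) t x0 t0 + (1-p) * Gs p x t x0 t0 := by
  rcases lt_trichotomy x x0 with h | h | h
  · rw [Gs_zero_left h, Gs_zero_left (by omega), Gs_zero_left h]; ring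
  · subst h
    rw [Gs_eq_g le_rfl (by omega), Gs_eq_g le_rfl ht, Gs_zero_left (by omega),
      show (t+1-t0).toNat = (t-t0).toNat + 1 by omega, Int.sub_self, Int.toNat_zero, g_rec0]
    ring
  · have hx : x0 ≤ x := h.le
    obtain ⟨m, hm⟩ : ∃ m : ℕ, (x - x0).toNat = m + 1 := ⟨(x-x0).toNat - 1, by omega⟩
    rw [Gs_eq_g hx (by omega), Gs_eq_g (by omega) ht, Gs_eq_g hx ht,
      show (t+1-t0).toNat = (t-t0).toNat + 1 by omega, hm,
      show (x-1-x0).toNat = m by omega, g_rec]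



variable {B : ℤ → ℤ × ℤ}

lemma bstep (hB : IsBoundary B) (i : ℤ) :
    ((B (i+1)).1 = (B i).1 + 1 ∧ (B (i+1)).2 = (B i).2) ∨
    ((B (i+1)).1 = (B i).1 ∧ (B (i+1)).2 = (B i).2 - 1) := by
  rcases hB i with h | h
  · left; rw [h]; exact ⟨rfl, rfl⟩
  · right; rw [h]; exact ⟨rfl, rfl⟩

lemma mono_x_nat (hB : IsBoundary B) : ∀ n : ℕ, ∀ i : ℤ, (B i).1 ≤ (B (i + n)).1 := by
  intro n
  induction n with
  | zero => intro i; simp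
  | succ n ih =>
    intro i
    have h1 := ih i
    have h2 := bstep hB (i + n)
    have e : (i + ((n:ℕ)+1 : ℕ) : ℤ) = (i + n) + 1 := by push_cast; ring
    rw [e]
    rcases h2 with ⟨h, _⟩ | ⟨h, _⟩ <;> omega

lemma mono_t_nat (hB : IsBoundary B) : ∀ n : ℕ, ∀ i : ℤ, (B (i + n)).2 ≤ (B i).2 := by
  intro n
  induction n with
  | zero => intro i; simp
  | succ n ih =>
    intro i
    have h1 := ih i
    have h2 := bstep hB (i + n)
    have e : (i + ((n:ℕ)+1 : ℕ) : ℤ) = (i + n) + 1 := by push_cast; ring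
    rw [e]
    rcases h2 with ⟨_, h⟩ | ⟨_, h⟩ <;> omega

lemma mono_x (hB : IsBoundary B) {i j : ℤ} (hij : i ≤ j) : (B i).1 ≤ (B j).1 := by
  have := mono_x_nat hB (j - i).toNat i
  rwa [show i + ((j-i).toNat : ℤ) = j by omega] at this

lemma mono_t (hB : IsBoundary B) {i j : ℤ} (hij : i ≤ j) : (B j).2 ≤ (B i).2 := by
  have := mono_t_nat hB (j - i).toNat i
  rwa [show i + ((j-i).toNat : ℤ) = j by omega] at this

lemma diag (hB : IsBoundary B) : ∀ i : ℤ, (B i).1 - (B i).2 = i + ((B 0).1 - (B 0).2) := by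
  intro i
  induction i using Int.induction_on with
  | zero => simp
  | succ k ih =>
    have h := bstep hB k
    push_cast at ih ⊢
    rcases h with ⟨h1, h2⟩ | ⟨h1, h2⟩ <;> omega
  | pred k ih =>
    have h := bstep hB (-(k:ℤ) - 1)
    rw [show (-(k:ℤ) - 1) + 1 = -k by ring] at h
    push_cast at ih ⊢
    rcases h with ⟨h1, h2⟩ | ⟨h1, h2⟩ <;> omega

lemma mem_lower (B : ℤ → ℤ × ℤ) (i : ℤ) : B i ∈ lowerSet B := ⟨i, le_rfl, le_rfl⟩

lemma lower_dc {x t x' t' : ℤ} (h : (x, t) ∈ lowerSet B) (hx : x' ≤ x) (ht : t' ≤ t) :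
    (x', t') ∈ lowerSet B := by
  obtain ⟨j, h1, h2⟩ := h
  exact ⟨j, le_trans hx h1, le_trans ht h2⟩

lemma exit_not_mem (hB : IsBoundary B) (i : ℤ) :
    ((B i).1 + 1, (B i).2 + 1) ∉ lowerSet B := by
  rintro ⟨j, h1, h2⟩
  have h1' : (B i).1 + 1 ≤ (B j).1 := h1
  have h2' : (B i).2 + 1 ≤ (B j).2 := h2
  rcases le_or_gt j i with h | h
  · have := mono_x hB h; omega
  · have := mono_t hB h.le; omega

lemma lemA (hB : IsBoundary B) {x t : ℤ} (hyp : ∀ j : ℤ, (B j).1 ≤ x ∨ (B j).2 ≤ t) :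
    ∀ n : ℕ, ∀ i0 : ℤ, (B i0).1 = x → t ≤ (B i0).2 → (B (i0 + n)).2 ≤ t →
    ∃ i, B i = (x, t) := by
  intro n
  induction n with
  | zero =>
    intro i0 h1 h2 h3
    simp only [Nat.cast_zero, add_zero] at h3
    exact ⟨i0, Prod.ext h1 (le_antisymm h3 h2)⟩
  | succ n ih =>
    intro i0 h1 h2 h3
    by_cases he : (B i0).2 = t
    · exact ⟨i0, Prod.ext h1 he⟩
    · have h2' : t + 1 ≤ (B i0).2 := by omega
      rcases bstep hB i0 with ⟨ha, hb⟩ | ⟨ha, hb⟩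
      · rcases hyp (i0+1) with hc | hc <;> omega
      · apply ih (i0+1) (by omega) (by omega)
        rw [show i0 + 1 + (n:ℤ) = i0 + ((n:ℕ)+1 : ℕ) by push_cast; ring]
        exact h3

lemma lemB (hB : IsBoundary B) {x t : ℤ} (hyp : ∀ j : ℤ, (B j).1 ≤ x ∨ (B j).2 ≤ t) :
    ∀ n : ℕ, ∀ i0 : ℤ, (B i0).2 = t → x ≤ (B i0).1 → (B (i0 - n)).1 ≤ x →
    ∃ i, B i = (x, t) := by
  intro n
  induction n with
  | zero =>
    intro i0 h1 h2 h3
    simp only [Nat.cast_zero, sub_zero] at h3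
    exact ⟨i0, Prod.ext (le_antisymm h3 h2) h1⟩
  | succ n ih =>
    intro i0 h1 h2 h3
    by_cases he : (B i0).1 = x
    · exact ⟨i0, Prod.ext he h1⟩
    · have h2' : x + 1 ≤ (B i0).1 := by omega
      have hstep := bstep hB (i0 - 1)
      rw [show i0 - 1 + 1 = i0 by ring] at hstep
      rcases hstep with ⟨ha, hb⟩ | ⟨ha, hb⟩
      · apply ih (i0-1) (by omega) (by omega)
        rw [show i0 - 1 - (n:ℤ) = i0 - ((n:ℕ)+1 : ℕ) by push_cast; ring]
        exact h3
      · rcases hyp (i0-1) with hc | hc <;> omega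

lemma exit_boundary (hB : IsBoundary B) {x t : ℤ} (hin : (x, t) ∈ lowerSet B)
    (hout : (x+1, t+1) ∉ lowerSet B) : ∃ i, B i = (x, t) := by
  have hyp : ∀ j : ℤ, (B j).1 ≤ x ∨ (B j).2 ≤ t := by
    intro j
    by_contra h
    push_neg at h
    exact hout ⟨j, show x + 1 ≤ (B j).1 by omega, show t + 1 ≤ (B j).2 by omega⟩
  obtain ⟨i0, hx0, ht0⟩ := hin
  have hx0' : x ≤ (B i0).1 := hx0
  have ht0' : t ≤ (B i0).2 := ht0
  set c : ℤ := (B 0).1 - (B 0).2 with hc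
  rcases hyp i0 with h | h
  · -- (B i0).1 = x
    have hxe : (B i0).1 = x := le_antisymm h hx0'
    set j : ℤ := max i0 (x - t - c) with hj
    have hij : i0 ≤ j := le_max_left _ _
    have hdj := diag hB j
    have htj : (B j).2 ≤ t := by
      by_contra hcon
      push_neg at hcon
      have hxj : x - t - c ≤ j := le_max_right _ _
      rcases hyp j with h' | h' <;> omega
    apply lemA hB hyp (j - i0).toNat i0 hxe ht0'
    rwa [show i0 + (((j - i0).toNat : ℕ) : ℤ) = j by omega]
  · -- (B i0).2 = t
    have hte : (B i0).2 = t := le_antisymm h ht0'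
    set j : ℤ := min i0 (x - t - 1 - c) with hj
    have hij : j ≤ i0 := min_le_left _ _
    have hdj := diag hB j
    have hxj : (B j).1 ≤ x := by
      by_contra hcon
      push_neg at hcon
      have hxj' : j ≤ x - t - 1 - c := min_le_right _ _
      rcases hyp j with h' | h' <;> omega
    apply lemB hB hyp (i0 - j).toNat i0 hte hx0'
    rwa [show i0 - (((i0 - j).toNat : ℕ) : ℤ) = j by omega]


noncomputable def ind (B : ℤ → ℤ × ℤ) (x t : ℤ) : ℝ := if (x, t) ∈ lowerSet B then 1 else 0

noncomputable def Aa (p : ℝ) (B : ℤ → ℤ × ℤ) (x0 t0 : ℤ) (n : ℕ) : ℝ :=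
  ∑ x ∈ Finset.Icc x0 (x0 + n), ind B x (t0 + n) * Gs p x (t0 + n) x0 t0

noncomputable def Fe (p : ℝ) (B : ℤ → ℤ × ℤ) (x0 t0 : ℤ) (i : ℤ) : ℝ :=
  (p + (1 - p) * (if ((B i).1, (B i).2 + 1) ∉ lowerSet B then 1 else 0)) *
    Gs p (B i).1 (B i).2 x0 t0

noncomputable def Jt (B : ℤ → ℤ × ℤ) (x0 t0 : ℤ) (n : ℕ) : Finset ℤ :=
  (Finset.Icc (x0 - (t0 + n) - ((B 0).1 - (B 0).2)) (x0 - t0 - ((B 0).1 - (B 0).2))).filter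
    (fun i => (B i).2 = t0 + n)

lemma Aa_zero {p : ℝ} {B : ℤ → ℤ × ℤ} {x0 t0 : ℤ} (h0 : (x0, t0) ∈ lowerSet B) :
    Aa p B x0 t0 0 = 1 := by
  unfold Aa
  simp only [Nat.cast_zero, add_zero, Finset.Icc_self, Finset.sum_singleton]
  rw [ind, if_pos h0, Gs_self]
  ring

lemma level {p : ℝ} {B : ℤ → ℤ × ℤ} (hB : IsBoundary B) (x0 t0 : ℤ) (n : ℕ) :
    Aa p B x0 t0 n - Aa p B x0 t0 (n+1) = ∑ i ∈ Jt B x0 t0 n, Fe p B x0 t0 i := by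
  set c : ℤ := (B 0).1 - (B 0).2 with hc
  set T : ℤ := t0 + n with hT
  have hTt0 : t0 ≤ T := by omega
  -- rewrite Aa (n+1)
  have hA1 : Aa p B x0 t0 (n+1) =
      ∑ x ∈ Finset.Icc x0 (x0 + (n:ℤ) + 1),
        (p * (ind B x (T+1) * Gs p (x-1) T x0 t0) +
         (1-p) * (ind B x (T+1) * Gs p x T x0 t0)) := by
    unfold Aa
    simp only [Nat.cast_add, Nat.cast_one]
    rw [show t0 + ((n:ℤ) + 1) = T + 1 by omega,
        show x0 + ((n:ℤ) + 1) = x0 + (n:ℤ) + 1 by ring]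
    refine Finset.sum_congr rfl fun x _ => ?_
    rw [Gs_rec hTt0]
    ring
  have hS1 : ∑ x ∈ Finset.Icc x0 (x0 + (n:ℤ) + 1), ind B x (T+1) * Gs p (x-1) T x0 t0
      = ∑ x ∈ Finset.Icc x0 (x0 + (n:ℤ)), ind B (x+1) (T+1) * Gs p x T x0 t0 := by
    rw [show Finset.Icc x0 (x0 + (n:ℤ) + 1)
          = (Finset.Icc (x0 - 1) (x0 + (n:ℤ))).map (addRightEmbedding 1) by
        rw [Finset.map_add_right_Icc]; congr 1; ring]
    rw [Finset.sum_map]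
    simp only [addRightEmbedding_apply, add_sub_cancel_right]
    symm
    apply Finset.sum_subset
    · intro x hx
      simp only [Finset.mem_Icc] at hx ⊢
      omega
    · intro x hx hx'
      simp only [Finset.mem_Icc] at hx hx'
      rw [Gs_zero_left (by omega)]
      ring
  have hS2 : ∑ x ∈ Finset.Icc x0 (x0 + (n:ℤ) + 1), ind B x (T+1) * Gs p x T x0 t0
      = ∑ x ∈ Finset.Icc x0 (x0 + (n:ℤ)), ind B x (T+1) * Gs p x T x0 t0 := by
    symm
    apply Finset.sum_subset
    · intro x hx
      simp only [Finset.mem_Icc] at hx ⊢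
      omega
    · intro x hx hx'
      simp only [Finset.mem_Icc] at hx hx'
      rw [Gs_zero_right (by omega)]
      ring
  have key : Aa p B x0 t0 n - Aa p B x0 t0 (n+1) =
      ∑ x ∈ Finset.Icc x0 (x0 + (n:ℤ)),
        Gs p x T x0 t0 * (p * (ind B x T - ind B (x+1) (T+1)) +
          (1-p) * (ind B x T - ind B x (T+1))) := by
    rw [hA1, Finset.sum_add_distrib, ← Finset.mul_sum, ← Finset.mul_sum, hS1, hS2]
    unfold Aa
    rw [← hT, Finset.mul_sum, Finset.mul_sum, ← Finset.sum_add_distrib, ← Finset.sum_sub_distrib]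
    refine Finset.sum_congr rfl fun x _ => ?_
    ring
  rw [key]
  -- restrict to exit points
  have hfilter : ∑ x ∈ Finset.Icc x0 (x0 + (n:ℤ)),
      Gs p x T x0 t0 * (p * (ind B x T - ind B (x+1) (T+1)) +
        (1-p) * (ind B x T - ind B x (T+1)))
      = ∑ x ∈ (Finset.Icc x0 (x0 + (n:ℤ))).filter
          (fun x => (x, T) ∈ lowerSet B ∧ (x+1, T+1) ∉ lowerSet B),
        Gs p x T x0 t0 * (p * (ind B x T - ind B (x+1) (T+1)) +
          (1-p) * (ind B x T - ind B x (T+1))) := by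
    symm
    apply Finset.sum_filter_of_ne
    intro x _ hne
    by_contra hP
    apply hne
    by_cases hmem : (x, T) ∈ lowerSet B
    · have hmem2 : (x+1, T+1) ∈ lowerSet B := by
        by_contra hmem2
        exact hP ⟨hmem, hmem2⟩
      have hmem3 : (x, T+1) ∈ lowerSet B := lower_dc hmem2 (by omega) (by omega)
      rw [ind, ind, ind, if_pos hmem, if_pos hmem2, if_pos hmem3]
      ring
    · have hmem2 : ind B (x+1) (T+1) = 0 := by
        rw [ind, if_neg]
        intro hm
        exact hmem (lower_dc hm (by omega) (by omega))
      have hmem3 : ind B x (T+1) = 0 := by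
        rw [ind, if_neg]
        intro hm
        exact hmem (lower_dc hm (by omega) (by omega))
      rw [ind, if_neg hmem, hmem2, hmem3]
      ring
  rw [hfilter]
  -- key pointwise fact
  have hkey : ∀ x : ℤ, (x, T) ∈ lowerSet B → (x+1, T+1) ∉ lowerSet B →
      B (x - T - c) = (x, T) := by
    intro x h1 h2
    obtain ⟨k, hk⟩ := exit_boundary hB h1 h2
    have hd := diag hB k
    rw [hk] at hd
    simp only at hd
    rw [show x - T - c = k by omega]
    exact hk
  apply Finset.sum_nbij' (i := fun x => x - T - c) (j := fun i => (B i).1)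
  · intro x hx
    simp only [Finset.mem_filter, Finset.mem_Icc] at hx
    obtain ⟨⟨hx1, hx2⟩, hP1, hP2⟩ := hx
    have hb := hkey x hP1 hP2
    rw [Jt, Finset.mem_filter, Finset.mem_Icc, ← hc, ← hT]
    refine ⟨⟨by omega, by omega⟩, ?_⟩
    rw [hb]
  · intro i hi
    rw [Jt, Finset.mem_filter, Finset.mem_Icc, ← hc, ← hT] at hi
    obtain ⟨⟨hi1, hi2⟩, hti⟩ := hi
    have hd := diag hB i
    simp only [Finset.mem_filter, Finset.mem_Icc]
    have hbi : ((B i).1, T) = B i := by rw [← hti]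
    refine ⟨⟨by omega, by omega⟩, ?_, ?_⟩
    · rw [hbi]; exact mem_lower B i
    · rw [show T + 1 = (B i).2 + 1 by omega]
      exact exit_not_mem hB i
  · intro x hx
    simp only [Finset.mem_filter, Finset.mem_Icc] at hx
    rw [hkey x hx.2.1 hx.2.2]
  · intro i hi
    rw [Jt, Finset.mem_filter, Finset.mem_Icc, ← hc, ← hT] at hi
    have hd := diag hB i
    omega
  · intro x hx
    simp only [Finset.mem_filter, Finset.mem_Icc] at hx
    obtain ⟨⟨hx1, hx2⟩, hP1, hP2⟩ := hx
    have hb := hkey x hP1 hP2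
    rw [Fe, hb]
    simp only
    rw [ind, if_pos hP1, ind, if_neg hP2, ind]
    by_cases hm : (x, T + 1) ∈ lowerSet B
    · rw [if_pos hm, if_neg (by simpa using hm)]
      ring
    · rw [if_neg hm, if_pos (by simpa using hm)]
      ring
noncomputable def Ub (B : ℤ → ℤ × ℤ) (x0 t0 : ℤ) (n : ℕ) : Finset ℤ :=
  (Finset.range (n+1)).biUnion (Jt B x0 t0)

lemma Fe_nonneg {p : ℝ} (hp : 0 ≤ p) (hp1 : p ≤ 1) (B : ℤ → ℤ × ℤ) (x0 t0 : ℤ) (i : ℤ) :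
    0 ≤ Fe p B x0 t0 i := by
  rw [Fe]
  apply mul_nonneg
  · have : (0:ℝ) ≤ 1 - p := by linarith
    have h2 : (0:ℝ) ≤ (if ((B i).1, (B i).2 + 1) ∉ lowerSet B then (1:ℝ) else 0) := by
      split <;> norm_num
    positivity
  · exact Gs_nonneg hp hp1 _ _ _ _

lemma Aa_nonneg {p : ℝ} (hp : 0 ≤ p) (hp1 : p ≤ 1) (B : ℤ → ℤ × ℤ) (x0 t0 : ℤ) (n : ℕ) :
    0 ≤ Aa p B x0 t0 n := by
  apply Finset.sum_nonneg
  intro x _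
  apply mul_nonneg
  · rw [ind]; split <;> norm_num
  · exact Gs_nonneg hp hp1 _ _ _ _

lemma Ub_sum {p : ℝ} {B : ℤ → ℤ × ℤ} (hB : IsBoundary B) {x0 t0 : ℤ}
    (h0 : (x0, t0) ∈ lowerSet B) (n : ℕ) :
    ∑ i ∈ Ub B x0 t0 n, Fe p B x0 t0 i = 1 - Aa p B x0 t0 (n+1) := by
  have hdisj : ∀ m m' : ℕ, m ≠ m' → Disjoint (Jt B x0 t0 m) (Jt B x0 t0 m') := by
    intro m m' hmm
    rw [Finset.disjoint_left]
    intro i hi hi'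
    rw [Jt, Finset.mem_filter] at hi hi'
    omega
  rw [Ub, Finset.sum_biUnion (fun m _ m' _ hmm => hdisj m m' hmm)]
  induction n with
  | zero =>
    rw [Finset.sum_range_one, ← level hB x0 t0 0, Aa_zero h0]
  | succ n ih =>
    rw [Finset.sum_range_succ, ih, ← level hB x0 t0 (n+1)]
    ring

lemma sum_le_one {p : ℝ} (hp : 0 ≤ p) (hp1 : p ≤ 1) {B : ℤ → ℤ × ℤ} (hB : IsBoundary B)
    {x0 t0 : ℤ} (h0 : (x0, t0) ∈ lowerSet B) (s : Finset ℤ) :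
    ∑ i ∈ s, Fe p B x0 t0 i ≤ 1 := by
  set n : ℕ := s.sup (fun i => ((B i).2 - t0).toNat) with hn
  have hsub : s.filter (fun i => Fe p B x0 t0 i ≠ 0) ⊆ Ub B x0 t0 n := by
    intro i hi
    rw [Finset.mem_filter] at hi
    obtain ⟨his, hne⟩ := hi
    have hG : Gs p (B i).1 (B i).2 x0 t0 ≠ 0 := by
      intro h
      apply hne
      rw [Fe, h, mul_zero]
    have hcond : 0 ≤ (B i).1 - x0 ∧ (B i).1 - x0 ≤ (B i).2 - t0 := by
      by_contra hc
      exact hG (if_neg hc)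
    have hm : ((B i).2 - t0).toNat ≤ n := Finset.le_sup (f := fun i => ((B i).2 - t0).toNat) his
    rw [Ub, Finset.mem_biUnion]
    refine ⟨((B i).2 - t0).toNat, Finset.mem_range.2 (by omega), ?_⟩
    rw [Jt, Finset.mem_filter, Finset.mem_Icc]
    have hd := diag hB i
    refine ⟨⟨by omega, by omega⟩, by omega⟩
  calc ∑ i ∈ s, Fe p B x0 t0 i
      = ∑ i ∈ s.filter (fun i => Fe p B x0 t0 i ≠ 0), Fe p B x0 t0 i := by
        rw [Finset.sum_filter_of_ne (fun x _ h => h)]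
    _ ≤ ∑ i ∈ Ub B x0 t0 n, Fe p B x0 t0 i :=
        Finset.sum_le_sum_of_subset_of_nonneg hsub (fun i _ _ => Fe_nonneg hp hp1 B x0 t0 i)
    _ = 1 - Aa p B x0 t0 (n+1) := Ub_sum hB h0 n
    _ ≤ 1 := by
        have := Aa_nonneg hp hp1 B x0 t0 (n+1)
        linarith

lemma Aa_tendsto {p : ℝ} (hp : 0 < p) (hp1 : p < 1) {B : ℤ → ℤ × ℤ} (hB : IsBoundary B)
    (x0 t0 : ℤ) :
    Filter.Tendsto (Aa p B x0 t0) Filter.atTop (nhds 0) := by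
  set q : ℝ := 1 - p with hq
  have hq0 : 0 ≤ q := by rw [hq]; linarith
  have hq1 : q < 1 := by rw [hq]; linarith
  have hqpos : 0 < q := by rw [hq]; linarith
  set M : ℤ := (B 0).1 with hM
  set K : ℕ := (M - x0).toNat with hK
  set N0 : ℕ := max (K + 1) (((B 0).2 - t0).toNat + 1) with hN0
  have hbound : ∀ n : ℕ, N0 ≤ n →
      Aa p B x0 t0 n ≤ ((K:ℝ)+1) * (q^K)⁻¹ * ((n:ℝ)^K * q^n) := by
    intro n hn
    have hKn : K ≤ n := by omega
    have hn1 : 1 ≤ n := by omega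
    have htn : (B 0).2 - t0 + 1 ≤ (n:ℤ) := by
      have : ((B 0).2 - t0).toNat + 1 ≤ n := le_trans (le_max_right _ _) hn
      omega
    set D : ℝ := (n:ℝ)^K * q^(n - K) with hD
    have hD0 : 0 ≤ D := by positivity
    have hterm : ∀ x ∈ Finset.Icc x0 (x0 + (n:ℤ)),
        ind B x (t0 + n) * Gs p x (t0 + n) x0 t0 ≤ if x ≤ M then D else 0 := by
      intro x hx
      rw [Finset.mem_Icc] at hx
      by_cases hmem : (x, t0 + (n:ℤ)) ∈ lowerSet B
      · have hxM : x ≤ M := by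
          obtain ⟨j, h1, h2⟩ := hmem
          have h1' : x ≤ (B j).1 := h1
          have h2' : t0 + (n:ℤ) ≤ (B j).2 := h2
          rcases le_or_gt j 0 with hj | hj
          · have := mono_x hB hj
            omega
          · have := mono_t hB hj.le
            omega
        rw [if_pos hxM, ind, if_pos hmem, one_mul,
            Gs_eq_g hx.1 (by omega),
            show (t0 + (n:ℤ) - t0).toNat = n by omega]
        set k : ℕ := (x - x0).toNat with hk
        have hkK : k ≤ K := by omega
        have hkn : k ≤ n := by omega
        rw [g, hD]
        have c1 : p ^ k ≤ 1 := pow_le_one₀ hp.le hp1.le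
        have c2 : q ^ (n - k) ≤ q ^ (n - K) :=
          pow_le_pow_of_le_one hq0 hq1.le (by omega)
        have c3 : ((n.choose k : ℕ) : ℝ) ≤ (n:ℝ)^K := by
          calc ((n.choose k : ℕ) : ℝ) ≤ ((n ^ k : ℕ) : ℝ) := by
                exact_mod_cast Nat.choose_le_pow n k
            _ ≤ ((n ^ K : ℕ) : ℝ) := by
                exact_mod_cast Nat.pow_le_pow_right hn1 hkK
            _ = (n:ℝ)^K := by push_cast; ring
        calc p ^ k * q ^ (n - k) * ((n.choose k : ℕ) : ℝ)
            ≤ 1 * q ^ (n - K) * ((n:ℝ)^K) := by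
              apply mul_le_mul (mul_le_mul c1 c2 (by positivity) (by norm_num)) c3
                (by positivity) (by positivity)
          _ = (n:ℝ)^K * q^(n - K) := by ring
      · rw [ind, if_neg hmem, zero_mul]
        split
        · exact hD0
        · exact le_refl 0
    unfold Aa
    calc ∑ x ∈ Finset.Icc x0 (x0 + (n:ℤ)), ind B x (t0 + (n:ℤ)) * Gs p x (t0 + (n:ℤ)) x0 t0
        ≤ ∑ x ∈ Finset.Icc x0 (x0 + (n:ℤ)), (if x ≤ M then D else 0) :=
          Finset.sum_le_sum hterm
      _ = ∑ x ∈ (Finset.Icc x0 (x0 + (n:ℤ))).filter (fun x => x ≤ M), D := by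
          rw [Finset.sum_filter]
      _ ≤ ((K:ℝ)+1) * D := by
          rw [Finset.sum_const, nsmul_eq_mul]
          apply mul_le_mul_of_nonneg_right _ hD0
          have hcard : ((Finset.Icc x0 (x0 + (n:ℤ))).filter (fun x => x ≤ M)).card
              ≤ (Finset.Icc x0 M).card := by
            apply Finset.card_le_card
            intro x hx
            simp only [Finset.mem_filter, Finset.mem_Icc] at hx ⊢
            omega
          have hcard2 : (Finset.Icc x0 M).card = (M + 1 - x0).toNat := Int.card_Icc x0 M
          have : ((Finset.Icc x0 (x0 + (n:ℤ))).filter (fun x => x ≤ M)).card ≤ K + 1 := by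
            omega
          calc (((Finset.Icc x0 (x0 + (n:ℤ))).filter (fun x => x ≤ M)).card : ℝ)
              ≤ ((K + 1 : ℕ) : ℝ) := by exact_mod_cast this
            _ = (K:ℝ) + 1 := by push_cast; ring
      _ = ((K:ℝ)+1) * (q^K)⁻¹ * ((n:ℝ)^K * q^n) := by
          rw [hD]
          have hqK : q ^ (n - K) = q^n * (q^K)⁻¹ := by
            field_simp
            rw [← pow_add]
            congr 1
            omega
          rw [hqK]
          ring
  have hg : Filter.Tendsto (fun n : ℕ => ((K:ℝ)+1) * (q^K)⁻¹ * ((n:ℝ)^K * q^n))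
      Filter.atTop (nhds 0) := by
    have h1 : Filter.Tendsto (fun n : ℕ => ((n:ℝ))^K * q^n) Filter.atTop (nhds 0) := by
      apply (summable_pow_mul_geometric_of_norm_lt_one (R := ℝ) K (r := q) ?_).tendsto_atTop_zero
      rw [Real.norm_eq_abs, abs_of_nonneg hq0]
      exact hq1
    have := h1.const_mul (((K:ℝ)+1) * (q^K)⁻¹)
    simpa using this
  apply squeeze_zero' _ _ hg
  · exact Filter.Eventually.of_forall (fun n => Aa_nonneg hp.le hp1.le B x0 t0 n)
  · exact Filter.eventually_atTop.2 ⟨N0, hbound⟩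
end BPM

/-- The exit probabilities times the Green function define a probability measure on
the boundary: with `P_e((x_i,t_i)) = p + q·[(x_i,t_i+1) ∉ L̃]`, the series
`Σ_{i∈ℤ} P_e((x_i,t_i))·G((x_i,t_i)|(x⁰,t⁰))` converges and sums to `1`. -/
theorem boundary_probability_measure (p : ℝ) (hp : 0 < p) (hp1 : p < 1)
    (B : ℤ → ℤ × ℤ) (hB : IsBoundary B) (x0 t0 : ℤ)
    (h0 : (x0, t0) ∈ lowerSet B) :
    HasSum (fun i : ℤ =>
      (p + (1 - p) * (if ((B i).1, (B i).2 + 1) ∉ lowerSet B then 1 else 0)) *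
        Gs p (B i).1 (B i).2 x0 t0) 1 := by
  have hFe : (fun i : ℤ =>
      (p + (1 - p) * (if ((B i).1, (B i).2 + 1) ∉ lowerSet B then 1 else 0)) *
        Gs p (B i).1 (B i).2 x0 t0) = BPM.Fe p B x0 t0 := rfl
  rw [hFe]
  apply hasSum_of_isLUB_of_nonneg _ (BPM.Fe_nonneg hp.le hp1.le B x0 t0)
  constructor
  · rintro r ⟨s, rfl⟩
    exact BPM.sum_le_one hp.le hp1.le hB h0 s
  · intro b hb
    have hub : ∀ n : ℕ, 1 - BPM.Aa p B x0 t0 (n+1) ≤ b := by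
      intro n
      exact hb ⟨BPM.Ub B x0 t0 n, BPM.Ub_sum hB h0 n⟩
    have htend : Filter.Tendsto (fun n : ℕ => 1 - BPM.Aa p B x0 t0 (n+1))
        Filter.atTop (nhds 1) := by
      have h1 := (BPM.Aa_tendsto hp hp1 hB x0 t0).comp (Filter.tendsto_add_atTop_nat 1)
      have h2 := (tendsto_const_nhds (x := (1:ℝ)) (f := Filter.atTop (α := ℕ))).sub h1
      simpa using h2
    exact le_of_tendsto' htend hub
end

section
/- Let N ≥ 1 and let {τ^n_i : 1 ≤ i ≤ n ≤ N} be integers with strictly decreasing rows, τ^n_1 > τ^n_2 > … > τ^n_n for each n. For n = 0,…,N−1 let M^{(n)} be the (n+1)×(n+1) matrix whose entry in row i and column j is φ(τ^n_i, τ^{n+1}_j) for 1 ≤ i ≤ n and equals p for i = n+1 (the fictitious-variable row). Then ∏_{n=0}^{N−1} det M^{(n)} equals p^{N(N+1)/2} if the interlacing conditions τ^{j+1}_i ≥ τ^j_i and τ^j_i > τ^{j+1}_{i+1} hold for all 1 ≤ i ≤ j ≤ N−1, and equals 0 otherwise. -/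
open scoped Classical

/-- In `Fin m`, a downward-closed finset is a prefix: membership is
equivalent to being below the cardinality. -/
lemma prefix_mem_iff_lt_card {m : ℕ} (s : Finset (Fin m))
    (hdc : ∀ b b' : Fin m, b' ≤ b → b ∈ s → b' ∈ s) (b : Fin m) :
    b ∈ s ↔ (b : ℕ) < s.card := by
  constructor
  · intro hb
    have hsub : Finset.Iic b ⊆ s := fun b' hb' => hdc b b' (Finset.mem_Iic.mp hb') hb
    have h := Finset.card_le_card hsub
    rw [Fin.card_Iic] at h
    omega
  · intro hb
    by_contra hbs
    have hsub : s ⊆ Finset.Iio b := by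
      intro b' hb'
      rw [Finset.mem_Iio]
      by_contra h
      exact hbs (hdc b' b (by
        have : (b : ℕ) ≤ (b' : ℕ) := by
          have := not_lt.mp h
          exact this
        exact this) hb')
    have h := Finset.card_le_card hsub
    rw [Fin.card_Iio] at h
    omega

/-- Pigeonhole for monotone ℕ-sequences: if `k` is monotone on `[0,n]`,
`k n = n + 1`, and some value is "off" (`k a₀ ≤ a₀` or `k a₀ ≥ a₀ + 2`),
then either some value is `0` or two adjacent values agree. -/
lemma pigeon (k : ℕ → ℕ) (n : ℕ) (hmono : ∀ a, a < n → k a ≤ k (a + 1))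
    (hkn : k n = n + 1) (a0 : ℕ) (ha0 : a0 ≤ n)
    (hbad : k a0 ≤ a0 ∨ a0 + 2 ≤ k a0) :
    (∃ a ≤ n, k a = 0) ∨ (∃ a < n, k a = k (a + 1)) := by
  by_contra h
  push_neg at h
  obtain ⟨h0, heq⟩ := h
  have hstrict : ∀ a, a < n → k a < k (a + 1) := fun a ha =>
    lt_of_le_of_ne (hmono a ha) (heq a ha)
  have claim1 : ∀ a, a ≤ n → a + 1 ≤ k a := by
    intro a
    induction a with
    | zero => intro hh; have := h0 0 (by omega); omega
    | succ a ih =>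
      intro hh
      have h1 := hstrict a (by omega)
      have h2 := ih (by omega)
      omega
  have claim2 : ∀ d, d ≤ n → k (n - d) ≤ n - d + 1 := by
    intro d
    induction d with
    | zero => intro _; simpa using hkn.le
    | succ d ih =>
      intro hh
      have h1 := hstrict (n - (d + 1)) (by omega)
      have h2 : n - (d + 1) + 1 = n - d := by omega
      rw [h2] at h1
      have h3 := ih (by omega)
      omega
  have c1 := claim1 a0 ha0
  have c2 := claim2 (n - a0) (by omega)
  rw [show n - (n - a0) = a0 by omega] at c2
  omega

/-- The determinant of a single matrix `M^{(n)}`. -/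
lemma det_single (p : ℝ) (N n : ℕ) (hn : n < N) (τ : ℕ → ℕ → ℤ)
    (hrows : ∀ m i j : ℕ, 1 ≤ i → i < j → j ≤ m → m ≤ N → τ m j < τ m i) :
    Matrix.det (Matrix.of fun a b : Fin (n + 1) =>
        if (a : ℕ) < n then
          (if τ n ((a : ℕ) + 1) ≤ τ (n + 1) ((b : ℕ) + 1) then p else 0)
        else p) =
      if (∀ i : ℕ, 1 ≤ i → i ≤ n → τ n i ≤ τ (n + 1) i ∧ τ (n + 1) (i + 1) < τ n i)
      then p ^ (n + 1) else 0 := by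
  -- decreasing rows
  have hdec1 : ∀ j j' : ℕ, 1 ≤ j → j ≤ j' → j' ≤ n + 1 → τ (n + 1) j' ≤ τ (n + 1) j := by
    intro j j' h1 h2 h3
    rcases eq_or_lt_of_le h2 with rfl | h
    · exact le_refl _
    · exact le_of_lt (hrows (n + 1) j j' h1 h h3 (by omega))
  have hdec0 : ∀ i i' : ℕ, 1 ≤ i → i ≤ i' → i' ≤ n → τ n i' ≤ τ n i := by
    intro i i' h1 h2 h3
    rcases eq_or_lt_of_le h2 with rfl | h
    · exact le_refl _
    · exact le_of_lt (hrows n i i' h1 h h3 (by omega))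
  set Q : Fin (n + 1) → Fin (n + 1) → Prop :=
    fun a b => n ≤ (a : ℕ) ∨ τ n ((a : ℕ) + 1) ≤ τ (n + 1) ((b : ℕ) + 1) with hQdef
  have hA : (Matrix.of fun a b : Fin (n + 1) =>
      if (a : ℕ) < n then
        (if τ n ((a : ℕ) + 1) ≤ τ (n + 1) ((b : ℕ) + 1) then p else 0)
      else p) = Matrix.of fun a b => if Q a b then p else 0 := by
    funext a b
    simp only [Matrix.of_apply, hQdef]
    by_cases h : (a : ℕ) < n
    · rw [if_pos h]
      by_cases h2 : τ n ((a : ℕ) + 1) ≤ τ (n + 1) ((b : ℕ) + 1)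
      · rw [if_pos h2, if_pos (Or.inr h2)]
      · rw [if_neg h2, if_neg]
        rintro (hc | hc)
        · omega
        · exact h2 hc
    · rw [if_neg h, if_pos (Or.inl (by omega))]
  rw [hA]
  -- downward closedness and monotonicity of Q
  have hdcQ : ∀ (a b b' : Fin (n + 1)), b' ≤ b → Q a b → Q a b' := by
    rintro a b b' hle (h | h)
    · exact Or.inl h
    · refine Or.inr (le_trans h (hdec1 ((b' : ℕ) + 1) ((b : ℕ) + 1) (by omega)
        (by have : (b' : ℕ) ≤ (b : ℕ) := hle; omega) (by omega)))
  have hQmono : ∀ (a a' b : Fin (n + 1)), (a : ℕ) ≤ (a' : ℕ) → Q a b → Q a' b := by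
    rintro a a' b hle (h | h)
    · exact Or.inl (le_trans h hle)
    · by_cases h' : n ≤ (a' : ℕ)
      · exact Or.inl h'
      · exact Or.inr (le_trans (hdec0 ((a : ℕ) + 1) ((a' : ℕ) + 1) (by omega)
          (by omega) (by omega)) h)
  by_cases hC : ∀ i : ℕ, 1 ≤ i → i ≤ n → τ n i ≤ τ (n + 1) i ∧ τ (n + 1) (i + 1) < τ n i
  · rw [if_pos hC]
    have hQ : ∀ a b : Fin (n + 1), Q a b ↔ (b : ℕ) ≤ (a : ℕ) := by
      intro a b
      have hb := b.isLt
      have ha := a.isLt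
      constructor
      · rintro (h | h)
        · omega
        · by_contra hba
          push_neg at hba
          by_cases han : (a : ℕ) < n
          · have h2 := (hC ((a : ℕ) + 1) (by omega) (by omega)).2
            have h3 : τ (n + 1) ((b : ℕ) + 1) ≤ τ (n + 1) ((a : ℕ) + 1 + 1) :=
              hdec1 ((a : ℕ) + 1 + 1) ((b : ℕ) + 1) (by omega) (by omega) (by omega)
            omega
          · omega
      · intro hba
        by_cases han : (a : ℕ) < n
        · refine Or.inr ?_
          have h1 := (hC ((a : ℕ) + 1) (by omega) (by omega)).1
          have h2 : τ (n + 1) ((a : ℕ) + 1) ≤ τ (n + 1) ((b : ℕ) + 1) :=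
            hdec1 ((b : ℕ) + 1) ((a : ℕ) + 1) (by omega) (by omega) (by omega)
          omega
        · exact Or.inl (by omega)
    have hA2 : (Matrix.of fun a b : Fin (n + 1) => if Q a b then p else 0) =
        Matrix.of fun a b : Fin (n + 1) => if (b : ℕ) ≤ (a : ℕ) then p else 0 := by
      funext a b
      simp only [Matrix.of_apply]
      exact if_congr (hQ a b) rfl rfl
    rw [hA2]
    rw [Matrix.det_of_lowerTriangular]
    · have : ∀ i : Fin (n + 1),
          (Matrix.of fun a b : Fin (n + 1) => if (b : ℕ) ≤ (a : ℕ) then p else 0) i i = p := by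
        intro i; simp [Matrix.of_apply]
      rw [Finset.prod_congr rfl fun i _ => this i]
      simp [Finset.prod_const]
    · intro i j hij
      have hij' : (i : ℕ) < (j : ℕ) := hij
      simp only [Matrix.of_apply]
      rw [if_neg (by omega)]
  · rw [if_neg hC]
    push_neg at hC
    obtain ⟨i, hi1, hin, hbad⟩ := hC
    -- the prefix-length function
    set s : Fin (n + 1) → Finset (Fin (n + 1)) :=
      fun a => Finset.univ.filter (fun b => Q a b) with hsdef
    set k : ℕ → ℕ := fun a => if h : a < n + 1 then (s ⟨a, h⟩).card else n + 1 with hkdef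
    have hK1 : ∀ a b : Fin (n + 1), Q a b ↔ (b : ℕ) < k (a : ℕ) := by
      intro a b
      have hk : k (a : ℕ) = (s a).card := by
        simp only [hkdef]
        rw [dif_pos a.isLt, Fin.eta]
      have hdc : ∀ b b' : Fin (n + 1), b' ≤ b → b ∈ s a → b' ∈ s a := by
        intro b b' hle hb
        simp only [hsdef, Finset.mem_filter, Finset.mem_univ, true_and] at hb ⊢
        exact hdcQ a b b' hle hb
      rw [hk, ← prefix_mem_iff_lt_card (s a) hdc]
      simp [hsdef]
    have hK1' : ∀ (a b : ℕ) (ha : a < n + 1) (hb : b < n + 1),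
        Q ⟨a, ha⟩ ⟨b, hb⟩ ↔ b < k a := fun a b ha hb => hK1 ⟨a, ha⟩ ⟨b, hb⟩
    have hmonoK : ∀ a, a < n → k a ≤ k (a + 1) := by
      intro a ha
      simp only [hkdef]
      rw [dif_pos (by omega : a < n + 1), dif_pos (by omega : a + 1 < n + 1)]
      apply Finset.card_le_card
      intro b hb
      simp only [hsdef, Finset.mem_filter, Finset.mem_univ, true_and] at hb ⊢
      exact hQmono ⟨a, by omega⟩ ⟨a + 1, by omega⟩ b (by simp) hb
    have hkn : k n = n + 1 := by
      simp only [hkdef]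
      rw [dif_pos (by omega : n < n + 1)]
      have : s ⟨n, by omega⟩ = Finset.univ := by
        apply Finset.filter_true_of_mem
        intro b _
        exact Or.inl (le_refl n)
      rw [this, Finset.card_univ, Fintype.card_fin]
    set a0 : ℕ := i - 1 with ha0def
    have ha0n : a0 < n := by omega
    have ha0i : a0 + 1 = i := by omega
    have hbadk : k a0 ≤ a0 ∨ a0 + 2 ≤ k a0 := by
      by_cases hP : τ n i ≤ τ (n + 1) i
      · -- second interlacing fails: τ n i ≤ τ (n+1) (i+1)
        have hQ2 : τ n i ≤ τ (n + 1) (i + 1) := by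
          have := hbad hP
          omega
        right
        have hQab : Q ⟨a0, by omega⟩ ⟨a0 + 1, by omega⟩ := by
          refine Or.inr ?_
          simp only []
          rw [ha0i]
          exact hQ2
        have := (hK1' a0 (a0 + 1) (by omega) (by omega)).mp hQab
        omega
      · -- first interlacing fails: τ (n+1) i < τ n i
        left
        push_neg at hP
        have hQab : ¬ Q ⟨a0, by omega⟩ ⟨a0, by omega⟩ := by
          rintro (h | h)
          · simp only [] at h; omega
          · simp only [] at h
            rw [ha0i] at h
            omega
        have := (hK1' a0 a0 (by omega) (by omega)).not.mp hQab
        omega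
    rcases pigeon k n hmonoK hkn a0 (by omega) hbadk with ⟨a, han, hka⟩ | ⟨a, han, hka⟩
    · -- zero row
      apply Matrix.det_eq_zero_of_row_eq_zero (⟨a, by omega⟩ : Fin (n + 1))
      intro b
      simp only [Matrix.of_apply]
      rw [if_neg]
      intro hQab
      have := (hK1' a (b : ℕ) (by omega) b.isLt).mp (by exact hQab)
      omega
    · -- two equal rows
      apply Matrix.det_zero_of_row_eq
        (i := (⟨a, by omega⟩ : Fin (n + 1))) (j := (⟨a + 1, by omega⟩ : Fin (n + 1)))
      · exact ne_of_lt (Fin.mk_lt_mk.mpr (by omega))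
      · funext b
        simp only [Matrix.of_apply]
        refine if_congr ?_ rfl rfl
        have e1 := hK1' a (b : ℕ) (by omega) b.isLt
        have e2 := hK1' (a + 1) (b : ℕ) (by omega) b.isLt
        have e3 : ((b : ℕ) < k a) ↔ ((b : ℕ) < k (a + 1)) := by rw [hka]
        exact (e1.trans (e3.trans e2.symm) : _)

/-- Product of the determinants of the matrices `M^{(n)}` built from
`φ(z,y) = p·[y ≥ z]` (with the fictitious-variable row identically `p`):
it equals `p^{N(N+1)/2}` if the interlacing conditions hold, and `0` otherwise. -/
theorem product_of_phi_determinants (p : ℝ) (hp : 0 < p) (hp1 : p < 1)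
    (N : ℕ) (hN : 1 ≤ N) (τ : ℕ → ℕ → ℤ)
    (hrows : ∀ n i j : ℕ, 1 ≤ i → i < j → j ≤ n → n ≤ N → τ n j < τ n i) :
    (∏ n ∈ Finset.range N,
        Matrix.det (Matrix.of fun a b : Fin (n + 1) =>
          if (a : ℕ) < n then
            (if τ n ((a : ℕ) + 1) ≤ τ (n + 1) ((b : ℕ) + 1) then p else 0)
          else p)) =
      if (∀ i j : ℕ, 1 ≤ i → i ≤ j → j ≤ N - 1 →
            τ j i ≤ τ (j + 1) i ∧ τ (j + 1) (i + 1) < τ j i)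
      then p ^ (N * (N + 1) / 2) else 0 := by
  have hfac : ∀ n ∈ Finset.range N,
      Matrix.det (Matrix.of fun a b : Fin (n + 1) =>
          if (a : ℕ) < n then
            (if τ n ((a : ℕ) + 1) ≤ τ (n + 1) ((b : ℕ) + 1) then p else 0)
          else p) =
        if (∀ i : ℕ, 1 ≤ i → i ≤ n → τ n i ≤ τ (n + 1) i ∧ τ (n + 1) (i + 1) < τ n i)
        then p ^ (n + 1) else 0 := by
    intro n hn
    exact det_single p N n (Finset.mem_range.mp hn) τ hrows
  rw [Finset.prod_congr rfl hfac]
  by_cases hG : ∀ i j : ℕ, 1 ≤ i → i ≤ j → j ≤ N - 1 →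
      τ j i ≤ τ (j + 1) i ∧ τ (j + 1) (i + 1) < τ j i
  · rw [if_pos hG]
    have hall : ∀ n ∈ Finset.range N,
        (if (∀ i : ℕ, 1 ≤ i → i ≤ n → τ n i ≤ τ (n + 1) i ∧ τ (n + 1) (i + 1) < τ n i)
        then p ^ (n + 1) else (0 : ℝ)) = p ^ (n + 1) := by
      intro n hn
      rw [if_pos]
      intro i hi1 hin
      exact hG i n hi1 hin (by
        have := Finset.mem_range.mp hn
        omega)
    rw [Finset.prod_congr rfl hall]
    rw [Finset.prod_pow_eq_pow_sum]
    congr 1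
    have h1 : (∑ i ∈ Finset.range (N + 1), i) * 2 = N * (N + 1) := by
      rw [Finset.sum_range_id_mul_two (N + 1), Nat.add_sub_cancel, Nat.mul_comm]
    have h2 : (∑ i ∈ Finset.range (N + 1), i) = (∑ i ∈ Finset.range N, (i + 1)) + 0 :=
      Finset.sum_range_succ' (fun i => i) N
    omega
  · rw [if_neg hG]
    push_neg at hG
    obtain ⟨i, j, hi1, hij, hjN, hbad⟩ := hG
    apply Finset.prod_eq_zero (i := j) (Finset.mem_range.mpr (by omega))
    rw [if_neg]
    intro hCj
    obtain ⟨hP, hQ⟩ := hCj i hi1 hij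
    have := hbad hP
    omega
end

section
/- Let 0 < p < 1, q = 1−p, and let ν > 0 and γ > 0 be reals. Set ω := (√(qν)+√γ)²/p and define, for real w > 1, f(w) := ω·log(q+p/w) + ν·log(1−1/w) + γ·log w. Then the point w_0 := 1 + √(ν/(qγ)) is a double critical point of f: f′(w_0) = 0 and f″(w_0) = 0. -/
open Real

lemma hasDerivAt_f_aux (p q ν γ ω : ℝ) (hp : 0 < p) (hq : 0 < q)
    (w : ℝ) (hw : 1 < w) :
    HasDerivAt (fun w => ω * Real.log (q + p / w) + ν * Real.log (1 - 1 / w) + γ * Real.log w)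
      (γ/w + ν/(w*(w-1)) - ω*p/(w*(q*w+p))) w := by
  have hw0 : (0:ℝ) < w := by linarith
  have hwne : w ≠ 0 := ne_of_gt hw0
  have hw1 : w - 1 ≠ 0 := by intro h; nlinarith
  have hinv : HasDerivAt (fun x : ℝ => x⁻¹) (-(w^2)⁻¹) w := hasDerivAt_inv hwne
  have h1 : HasDerivAt (fun x : ℝ => q + p / x) (p * -(w^2)⁻¹) w := by
    simpa [div_eq_mul_inv] using (hinv.const_mul p).const_add q
  have pos1 : 0 < q + p / w := by positivity
  have h2 : HasDerivAt (fun x : ℝ => 1 - 1 / x) ((w^2)⁻¹) w := by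
    simpa [sub_eq_add_neg, one_div] using (hinv.neg).const_add 1
  have pos2 : 0 < 1 - 1 / w := by
    have : 1 / w < 1 := by rw [div_lt_one hw0]; exact hw
    linarith
  have hl1 := (h1.log (ne_of_gt pos1)).const_mul ω
  have hl2 := (h2.log (ne_of_gt pos2)).const_mul ν
  have hl3 := (Real.hasDerivAt_log hwne).const_mul γ
  have H := (hl1.add hl2).add hl3
  refine H.congr_deriv ?_
  have hd1 : q + p / w ≠ 0 := ne_of_gt pos1
  have hd2 : (1:ℝ) - 1 / w ≠ 0 := ne_of_gt pos2
  have hd3 : q * w + p ≠ 0 := by positivity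
  field_simp
  ring

lemma hasDerivAt_g_aux (p q ν γ ω : ℝ) (hp : 0 < p) (hq : 0 < q)
    (w : ℝ) (hw : 1 < w) :
    HasDerivAt (fun w => γ/w + ν/(w*(w-1)) - ω*p/(w*(q*w+p)))
      (-(γ/w^2) - ν*(2*w-1)/(w*(w-1))^2 + ω*p*(2*q*w+p)/(w*(q*w+p))^2) w := by
  have hw0 : (0:ℝ) < w := by linarith
  have hwne : w ≠ 0 := ne_of_gt hw0
  have hw1 : w - 1 ≠ 0 := by intro h; nlinarith
  have hu1 : w * (w - 1) ≠ 0 := mul_ne_zero hwne hw1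
  have hu2pos : 0 < q * w + p := by positivity
  have hu2 : w * (q * w + p) ≠ 0 := by positivity
  have t1 : HasDerivAt (fun x : ℝ => γ / x) (γ * -(w^2)⁻¹) w := by
    simpa [div_eq_mul_inv] using (hasDerivAt_inv hwne).const_mul γ
  have hu : HasDerivAt (fun x : ℝ => x * (x - 1)) (2*w - 1) w := by
    have := (hasDerivAt_id w).mul ((hasDerivAt_id w).sub_const 1)
    refine this.congr_deriv ?_
    simp only [id_eq]; ring
  have t2 : HasDerivAt (fun x : ℝ => ν / (x * (x - 1)))
      (ν * (-(2*w-1) / (w*(w-1))^2)) w := by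
    simpa [div_eq_mul_inv] using (hu.inv hu1).const_mul ν
  have hv : HasDerivAt (fun x : ℝ => x * (q * x + p)) (2*q*w + p) w := by
    have := (hasDerivAt_id w).mul (((hasDerivAt_id w).const_mul q).add_const p)
    refine this.congr_deriv ?_
    simp only [id_eq]; ring
  have t3 : HasDerivAt (fun x : ℝ => ω * p / (x * (q * x + p)))
      (ω * p * (-(2*q*w+p) / (w*(q*w+p))^2)) w := by
    simpa [div_eq_mul_inv] using (hv.inv hu2).const_mul (ω * p)
  have H := (t1.add t2).sub t3
  refine H.congr_deriv ?_
  field_simp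
  ring

set_option maxHeartbeats 1000000 in
/-- The point `w₀ = 1 + √(ν/(qγ))` is a double critical point of
`f(w) = ω log(q+p/w) + ν log(1-1/w) + γ log w` with `ω = (√(qν)+√γ)²/p`:
both `f′(w₀) = 0` and `f″(w₀) = 0`. -/
theorem double_critical_point (p ν γ : ℝ) (hp : 0 < p) (hp1 : p < 1)
    (hν : 0 < ν) (hγ : 0 < γ) :
    let q : ℝ := 1 - p
    let ω : ℝ := (Real.sqrt (q * ν) + Real.sqrt γ) ^ 2 / p
    let f : ℝ → ℝ := fun w =>
      ω * Real.log (q + p / w) + ν * Real.log (1 - 1 / w) + γ * Real.log w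
    let w0 : ℝ := 1 + Real.sqrt (ν / (q * γ))
    deriv f w0 = 0 ∧ deriv (deriv f) w0 = 0 := by
  intro q ω f w0
  have hqdef : q = 1 - p := rfl
  have hωdef : ω = (Real.sqrt (q * ν) + Real.sqrt γ) ^ 2 / p := rfl
  have hfdef : f = fun w =>
      ω * Real.log (q + p / w) + ν * Real.log (1 - 1 / w) + γ * Real.log w := rfl
  have hw0def : w0 = 1 + Real.sqrt (ν / (q * γ)) := rfl
  clear_value q ω f w0
  have hq : 0 < q := by rw [hqdef]; linarith
  set a := Real.sqrt (q * ν) with ha_def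
  set b := Real.sqrt γ with hb_def
  have ha : 0 < a := Real.sqrt_pos.mpr (by positivity)
  have hb : 0 < b := Real.sqrt_pos.mpr hγ
  have ha2 : a ^ 2 = q * ν := Real.sq_sqrt (by positivity)
  have hb2 : b ^ 2 = γ := Real.sq_sqrt hγ.le
  have hνa : ν = a ^ 2 / q := by rw [ha2]; field_simp
  have hγb : γ = b ^ 2 := hb2.symm
  have hsab : Real.sqrt (ν / (q * γ)) = a / (q * b) := by
    have h1 : ν / (q * γ) = (a / (q * b)) ^ 2 := by
      rw [hνa, hγb]; field_simp
    rw [h1, Real.sqrt_sq (by positivity)]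
  have hw0s : w0 = 1 + a / (q * b) := by rw [hw0def, hsab]
  have hw0gt : 1 < w0 := by
    rw [hw0s]
    have : 0 < a / (q * b) := by positivity
    linarith
  have hωp : ω * p = (a + b) ^ 2 := by
    rw [hωdef]; field_simp
  have hpq : p = 1 - q := by rw [hqdef]; ring
  -- the explicit first derivative
  set g : ℝ → ℝ := fun w => γ/w + ν/(w*(w-1)) - ω*p/(w*(q*w+p)) with hg_def
  have hderiv : ∀ w : ℝ, 1 < w → deriv f w = g w := by
    intro w hw
    rw [hfdef]
    exact (hasDerivAt_f_aux p q ν γ ω hp hq w hw).deriv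
  have hmem : {w : ℝ | 1 < w} ∈ nhds w0 :=
    (isOpen_lt continuous_const continuous_id).mem_nhds hw0gt
  have hEv : deriv f =ᶠ[nhds w0] g :=
    Filter.eventuallyEq_of_mem hmem (fun w hw => hderiv w hw)
  have hne1 : q * b ≠ 0 := by positivity
  have hne2 : q * b + a ≠ 0 := by positivity
  have hne3 : b + a ≠ 0 := by positivity
  have hne4 : a + q * b ≠ 0 := by positivity
  have hne5 : b * q * a + b * q ^ 2 * a + b ^ 2 * q ^ 2 + q * a ^ 2 ≠ 0 := by positivity
  have hw0pos : (0:ℝ) < w0 := by linarith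
  have hw0ne : w0 ≠ 0 := ne_of_gt hw0pos
  have hw1ne : w0 - 1 ≠ 0 := by intro h; nlinarith
  have hqwp : (0:ℝ) < q * w0 + p := by positivity
  have hqwpne : q * w0 + p ≠ 0 := ne_of_gt hqwp
  have key1 : γ * ((w0-1)*(q*w0+p)) + ν * (q*w0+p) - ω*p*(w0-1) = 0 := by
    rw [hw0s, hγb, hνa, hωp, hpq]
    field_simp
    ring
  have hgw0 : g w0 = 0 := by
    show γ/w0 + ν/(w0*(w0-1)) - ω*p/(w0*(q*w0+p)) = 0
    have : γ/w0 + ν/(w0*(w0-1)) - ω*p/(w0*(q*w0+p))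
        = (γ * ((w0-1)*(q*w0+p)) + ν * (q*w0+p) - ω*p*(w0-1))
          / (w0*(w0-1)*(q*w0+p)) := by
      field_simp
    rw [this, key1, zero_div]
  constructor
  · rw [hderiv w0 hw0gt, hgw0]
  · rw [hEv.deriv_eq]
    have hD : deriv g w0 = -(γ/w0^2) - ν*(2*w0-1)/(w0*(w0-1))^2
        + ω*p*(2*q*w0+p)/(w0*(q*w0+p))^2 := by
      rw [hg_def]
      exact (hasDerivAt_g_aux p q ν γ ω hp hq w0 hw0gt).deriv
    rw [hD]
    have key2 : γ * ((w0-1)^2*(q*w0+p)^2) + ν*(2*w0-1)*(q*w0+p)^2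
        - ω*p*(2*q*w0+p)*(w0-1)^2 = 0 := by
      rw [hw0s, hγb, hνa, hωp, hpq]
      field_simp
      ring
    have : -(γ/w0^2) - ν*(2*w0-1)/(w0*(w0-1))^2 + ω*p*(2*q*w0+p)/(w0*(q*w0+p))^2
        = -(γ * ((w0-1)^2*(q*w0+p)^2) + ν*(2*w0-1)*(q*w0+p)^2
            - ω*p*(2*q*w0+p)*(w0-1)^2) / (w0^2*(w0-1)^2*(q*w0+p)^2) := by
      field_simp
      ring
    rw [this, key2, neg_zero, zero_div]
end
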